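/- arXiv:math/0604438 — 5 statements merged into one kernel-verified Lean document; each statement's English description precedes it below -/
import Mathlib

section
/- Let c, d be natural numbers with c ≥ 2 and d ≥ 1. Suppose that c divides k!·S(d,k) for every k ∈ {2,...,d}, where S(d,k) denotes the Stirling number of the second kind. Then every hypergraph H satisfies disc(Δ^d H, c) ≤ disc(H, c). -/
def stirling2 : ℕ → ℕ → ℕ
  | 0, 0 => 1
  | 0, _ + 1 => 0
  | _ + 1, 0 => 0
  | d + 1, k + 1 => (k + 1) * stirling2 d (k + 1) + stirling2 d k


/-- The discrepancy of a `c`-coloring `χ` of the hypergraph with edge set `H`. -/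
noncomputable def discCol {V : Type} (H : Finset (Finset V)) (c : ℕ) (χ : V → Fin c) : ℝ :=
  ⨆ E ∈ H, ⨆ i : Fin c, |((E.filter fun v => χ v = i).card : ℝ) - (E.card : ℝ) / (c : ℝ)|

/-- The `c`-color discrepancy of the hypergraph with edge set `H`. -/
noncomputable def disc {V : Type} (H : Finset (Finset V)) (c : ℕ) : ℝ :=
  ⨅ χ : V → Fin c, discCol H c χ

/-- The `d`-fold symmetric product of a hypergraph: edge set `{E^d : E ∈ H}`
on the vertex set `V^d`. -/
def symProd {V : Type} [DecidableEq V] (H : Finset (Finset V)) (d : ℕ) :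
    Finset (Finset (Fin d → V)) :=
  H.image fun E => Fintype.piFinset fun _ : Fin d => E

namespace SymAux

open Finset Function

/-- Number of surjections `Fin d → Fin k`. -/
noncomputable def N (d k : ℕ) : ℕ := Fintype.card {f : Fin d → Fin k // Surjective f}

lemma surj_comp_equiv {α β : Type*} [Fintype α] [Fintype β] [DecidableEq α] [DecidableEq β]
    (d : ℕ) (e : α ≃ β) :
    Fintype.card {f : Fin d → α // Surjective f}
      = Fintype.card {f : Fin d → β // Surjective f} := by
  apply Fintype.card_congr
  refine ⟨fun f => ⟨e ∘ f.1, e.surjective.comp f.2⟩,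
    fun g => ⟨e.symm ∘ g.1, e.symm.surjective.comp g.2⟩, ?_, ?_⟩ <;>
    · rintro ⟨f, hf⟩
      apply Subtype.ext
      funext a
      simp

lemma surj_snoc_iff {d K : ℕ} (g : Fin d → Fin K) (j : Fin K) :
    Surjective (Fin.snoc g j) ↔
      Surjective g ∨ (j ∉ Set.range g ∧ ∀ b, b ≠ j → ∃ a, g a = b) := by
  constructor
  · intro h
    by_cases hj : j ∈ Set.range g
    · left
      intro b
      obtain ⟨a, ha⟩ := h b
      induction a using Fin.lastCases with
      | last =>
        rw [Fin.snoc_last] at ha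
        obtain ⟨a', ha'⟩ := hj
        exact ⟨a', by rw [ha', ha]⟩
      | cast i => exact ⟨i, by rwa [Fin.snoc_castSucc] at ha⟩
    · right
      refine ⟨hj, fun b hb => ?_⟩
      obtain ⟨a, ha⟩ := h b
      induction a using Fin.lastCases with
      | last =>
        rw [Fin.snoc_last] at ha
        exact absurd ha.symm hb
      | cast i => exact ⟨i, by rwa [Fin.snoc_castSucc] at ha⟩
  · rintro (h | ⟨h1, h2⟩) b
    · obtain ⟨a, ha⟩ := h b
      exact ⟨a.castSucc, by rwa [Fin.snoc_castSucc]⟩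
    · by_cases hb : b = j
      · exact ⟨Fin.last d, by rw [Fin.snoc_last, hb]⟩
      · obtain ⟨a, ha⟩ := h2 b hb
        exact ⟨a.castSucc, by rwa [Fin.snoc_castSucc]⟩

lemma card_Q (d k : ℕ) (j : Fin (k + 1)) :
    Fintype.card {g : Fin d → Fin (k + 1) //
        j ∉ Set.range g ∧ ∀ b, b ≠ j → ∃ a, g a = b} = N d k := by
  classical
  have e1 : {g : Fin d → Fin (k + 1) // j ∉ Set.range g ∧ ∀ b, b ≠ j → ∃ a, g a = b}
      ≃ {h : Fin d → {b : Fin (k + 1) // b ≠ j} // Surjective h} := by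
    refine ⟨fun g => ⟨fun a => ⟨g.1 a, fun he => g.2.1 ⟨a, he⟩⟩,
        fun b => (g.2.2 b.1 b.2).imp fun a ha => Subtype.ext ha⟩,
      fun h => ⟨fun a => (h.1 a).1,
        ⟨fun hr => ?_, fun b hb => (h.2 ⟨b, hb⟩).imp fun a ha => congrArg Subtype.val ha⟩⟩,
      fun g => ?_, fun h => ?_⟩
    · obtain ⟨a, ha⟩ := hr
      exact (h.1 a).2 ha
    · apply Subtype.ext; rfl
    · apply Subtype.ext; funext a; apply Subtype.ext; rfl
  rw [Fintype.card_congr e1]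
  have e2 : {b : Fin (k + 1) // b ≠ j} ≃ Fin k := by
    refine (Equiv.subtypeEquiv (finSuccEquiv' j) fun b => ?_).trans
      ((Equiv.subtypeEquivRight fun o => Option.ne_none_iff_isSome).trans
        (Equiv.optionIsSomeEquiv (Fin k)))
    rw [← finSuccEquiv'_at j]
    exact not_congr (Equiv.apply_eq_iff_eq _).symm
  rw [surj_comp_equiv d e2, N]

lemma card_fix (d k : ℕ) (j : Fin (k + 1)) :
    Fintype.card {g : Fin d → Fin (k + 1) // Surjective (Fin.snoc g j)}
      = N d (k + 1) + N d k := by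
  classical
  rw [Fintype.card_congr (Equiv.subtypeEquivRight fun g => surj_snoc_iff g j)]
  have hdisj : Disjoint (fun g : Fin d → Fin (k + 1) => Surjective g)
      (fun g => j ∉ Set.range g ∧ ∀ b, b ≠ j → ∃ a, g a = b) := by
    rw [Pi.disjoint_iff]
    intro g
    rw [disjoint_iff]
    by_cases h : Surjective g
    · have : j ∈ Set.range g := h j
      simp only [inf_Prop_eq]
      refine eq_false ?_
      rintro ⟨-, h1, -⟩
      exact h1 this
    · simp only [inf_Prop_eq]
      refine eq_false ?_
      rintro ⟨hs, -⟩
      exact h hs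
  rw [Fintype.card_congr (subtypeOrEquiv _ _ hdisj), Fintype.card_sum, card_Q]
  all_goals
    congr 1
    all_goals exact Fintype.card_congr (Equiv.refl _)

lemma N_succ (d k : ℕ) : N (d + 1) (k + 1) = (k + 1) * (N d (k + 1) + N d k) := by
  classical
  have e : {f : Fin (d + 1) → Fin (k + 1) // Surjective f}
      ≃ Σ j : Fin (k + 1), {g : Fin d → Fin (k + 1) // Surjective (Fin.snoc g j)} := by
    refine ⟨fun f => ⟨f.1 (Fin.last d), Fin.init f.1, by rw [Fin.snoc_init_self]; exact f.2⟩,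
      fun x => ⟨Fin.snoc x.2.1 x.1, x.2.2⟩, fun f => ?_, fun x => ?_⟩
    · apply Subtype.ext
      exact Fin.snoc_init_self f.1
    · obtain ⟨j, g, hg⟩ := x
      have h1 : Fin.snoc (α := fun _ => Fin (k + 1)) g j (Fin.last d) = j := by simp
      have h2 : Fin.init (α := fun _ => Fin (k + 1)) (Fin.snoc g j) = g := by simp
      refine Sigma.ext h1 ?_
      refine (Subtype.heq_iff_coe_eq ?_).2 h2
      intro y
      simp [Fin.snoc_last]
  rw [N, Fintype.card_congr e, Fintype.card_sigma]
  simp only [card_fix]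
  simp [Finset.sum_const, mul_comm]

lemma N_eq (d k : ℕ) : N d k = k.factorial * stirling2 d k := by
  induction d generalizing k with
  | zero =>
    cases k with
    | zero =>
      have h : ∀ f : Fin 0 → Fin 0, Surjective f := fun f b => b.elim0
      rw [N]
      rw [Fintype.card_subtype]
      rw [Finset.filter_true_of_mem fun f _ => h f]
      simp [stirling2]
    | succ k =>
      rw [show stirling2 0 (k + 1) = 0 from rfl, Nat.mul_zero, N, Fintype.card_eq_zero_iff]
      refine ⟨fun f => ?_⟩
      obtain ⟨a, -⟩ := f.2 0
      exact a.elim0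
  | succ d ih =>
    cases k with
    | zero =>
      rw [show stirling2 (d + 1) 0 = 0 from rfl, Nat.mul_zero, N, Fintype.card_eq_zero_iff]
      exact ⟨fun f => (f.1 ⟨0, d.succ_pos⟩).elim0⟩
    | succ k =>
      rw [N_succ, ih, ih, stirling2, Nat.factorial_succ]
      ring

lemma N_eq_zero_of_lt {d k : ℕ} (h : d < k) : N d k = 0 := by
  rw [N, Fintype.card_eq_zero_iff]
  refine ⟨fun f => ?_⟩
  have := Fintype.card_le_of_surjective f.1 f.2
  simp only [Fintype.card_fin] at this
  omega

section Main

variable {V : Type} [Fintype V] [DecidableEq V] {d c : ℕ}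

/-- The image of a tuple. -/
def img (f : Fin d → V) : Finset V := Finset.image f Finset.univ

/-- The set of tuples with image exactly `S`. -/
def TS (S : Finset V) : Finset (Fin d → V) := Finset.univ.filter fun g => img g = S

/-- An injective enumeration of tuples. -/
noncomputable def ι : (Fin d → V) → ℕ := fun f => (Fintype.equivFin (Fin d → V) f : ℕ)

lemma ι_inj : Function.Injective (ι (V := V) (d := d)) := fun f g h =>
  (Fintype.equivFin (Fin d → V)).injective (Fin.val_injective h)

/-- The lifted coloring on tuples. -/
noncomputable def chi' (hd : 0 < d) (hc : 0 < c) (χ : V → Fin c) (f : Fin d → V) : Fin c :=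
  if (img f).card ≤ 1 then χ (f ⟨0, hd⟩)
  else ⟨((TS (d := d) (img f)).filter fun g => ι g < ι f).card % c, Nat.mod_lt _ hc⟩

lemma rank_even {α : Type*} [DecidableEq α] (ι' : α → ℕ) (hι : Function.Injective ι')
    (T : Finset α) {c : ℕ} (i : ℕ) (hdvd : c ∣ T.card) (hic : i < c) :
    (T.filter fun f => (T.filter fun g => ι' g < ι' f).card % c = i).card = T.card / c := by
  classical
  set ρ : α → ℕ := fun f => (T.filter fun g => ι' g < ι' f).card with hρ
  have hmono : ∀ f ∈ T, ∀ f' ∈ T, ι' f < ι' f' → ρ f < ρ f' := by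
    intro f hf f' hf' hlt
    apply Finset.card_lt_card
    constructor
    · intro g hg
      rw [Finset.mem_filter] at hg ⊢
      exact ⟨hg.1, hg.2.trans hlt⟩
    · intro hsub
      have : f ∈ T.filter fun g => ι' g < ι' f' := Finset.mem_filter.2 ⟨hf, hlt⟩
      have := hsub this
      rw [Finset.mem_filter] at this
      omega
  have hinj : Set.InjOn ρ T := by
    intro f hf f' hf' hee
    by_contra hne
    rcases Nat.lt_or_ge (ι' f) (ι' f') with h | h
    · have := hmono f hf f' hf' h; omega
    · rcases Nat.eq_or_lt_of_le h with h' | h'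
      · exact hne (hι h'.symm)
      · have := hmono f' hf' f hf h'; omega
  have himg : T.image ρ = Finset.range T.card := by
    apply Finset.eq_of_subset_of_card_le
    · intro x hx
      obtain ⟨f, hf, rfl⟩ := Finset.mem_image.1 hx
      rw [Finset.mem_range]
      have hsub : (T.filter fun g => ι' g < ι' f) ⊆ T.erase f := by
        intro g hg
        rw [Finset.mem_filter] at hg
        refine Finset.mem_erase.2 ⟨?_, hg.1⟩
        intro hgf
        rw [hgf] at hg
        omega
      calc ρ f ≤ (T.erase f).card := Finset.card_le_card hsub
        _ < T.card := Finset.card_lt_card (Finset.erase_ssubset hf)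
    · rw [Finset.card_range, Finset.card_image_of_injOn hinj]
  have key : (T.filter fun f => ρ f % c = i).image ρ
      = (Finset.range T.card).filter fun j => j % c = i := by
    rw [← himg, Finset.filter_image]
  have hcard : (T.filter fun f => ρ f % c = i).card
      = ((Finset.range T.card).filter fun j => j % c = i).card := by
    rw [← key, Finset.card_image_of_injOn (hinj.mono (Finset.filter_subset _ _))]
  rw [hcard]
  -- counting residues in a range
  obtain ⟨t, ht⟩ := hdvd
  rw [ht]
  have himg2 : (Finset.range (c * t)).filter (fun j => j % c = i)
      = (Finset.range t).image fun q => c * q + i := by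
    ext j
    simp only [Finset.mem_filter, Finset.mem_range, Finset.mem_image]
    constructor
    · rintro ⟨hj, rfl⟩
      refine ⟨j / c, ?_, ?_⟩
      · rw [Nat.div_lt_iff_lt_mul (by omega : 0 < c), mul_comm t c]
        exact hj
      · exact Nat.div_add_mod j c
    · rintro ⟨q, hq, rfl⟩
      refine ⟨?_, ?_⟩
      · calc c * q + i < c * (q + 1) := by rw [Nat.mul_succ]; omega
          _ ≤ c * t := Nat.mul_le_mul_left c hq
      · rw [Nat.mul_add_mod]
        exact Nat.mod_eq_of_lt hic
  have hinj2 : Function.Injective fun q => c * q + i := by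
    intro a b hab
    exact Nat.eq_of_mul_eq_mul_left (by omega) (Nat.add_right_cancel hab)
  rw [himg2, Finset.card_image_of_injective _ hinj2, Finset.card_range,
    Nat.mul_div_cancel_left _ (by omega : 0 < c)]

lemma card_TS (S : Finset V) (hd : 0 < d) :
    (TS (d := d) S).card = N d S.card := by
  classical
  have h1 : (TS (d := d) S).card = Fintype.card {f : Fin d → V // img f = S} := by
    rw [Fintype.card_subtype, TS]
  rw [h1]
  have e1 : {f : Fin d → V // img f = S} ≃ {h : Fin d → {x // x ∈ S} // Function.Surjective h} := by
    refine ⟨fun f => ⟨fun a => ⟨f.1 a, by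
        have h := Finset.mem_image_of_mem f.1 (Finset.mem_univ a)
        rw [show Finset.image f.1 Finset.univ = S from f.2] at h
        exact h⟩,
        fun v => ?_⟩,
      fun h => ⟨fun a => (h.1 a).1, ?_⟩, fun f => ?_, fun h => ?_⟩
    · have hv : v.1 ∈ img f.1 := f.2.symm ▸ v.2
      obtain ⟨a, -, ha⟩ := Finset.mem_image.1 hv
      exact ⟨a, Subtype.ext ha⟩
    · apply Finset.Subset.antisymm
      · intro v hv
        obtain ⟨a, -, ha⟩ := Finset.mem_image.1 hv
        exact ha ▸ (h.1 a).2
      · intro v hv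
        obtain ⟨a, ha⟩ := h.2 ⟨v, hv⟩
        exact Finset.mem_image.2 ⟨a, Finset.mem_univ a, by rw [ha]⟩
    · apply Subtype.ext; rfl
    · apply Subtype.ext; funext a; apply Subtype.ext; rfl
  rw [Fintype.card_congr e1, surj_comp_equiv d S.equivFin, N]

lemma dvd_card_TS (hd : 0 < d)
    (hdiv : ∀ k ∈ Finset.Icc 2 d, c ∣ k.factorial * stirling2 d k)
    (S : Finset V) (hS : 2 ≤ S.card) : c ∣ (TS (d := d) S).card := by
  rw [card_TS S hd]
  rcases le_or_gt S.card d with h | h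
  · rw [N_eq]
    exact hdiv _ (Finset.mem_Icc.2 ⟨hS, h⟩)
  · rw [N_eq_zero_of_lt h]
    exact dvd_zero c

lemma mem_piFinset_iff (E : Finset V) (f : Fin d → V) :
    f ∈ Fintype.piFinset (fun _ : Fin d => E) ↔ img f ⊆ E := by
  rw [Fintype.mem_piFinset, img, Finset.image_subset_iff]
  simp

lemma img_nonempty (hd : 0 < d) (f : Fin d → V) : (img f).Nonempty :=
  ⟨f ⟨0, hd⟩, Finset.mem_image_of_mem f (Finset.mem_univ _)⟩

lemma eq_const_of_card_le (hd : 0 < d) (f : Fin d → V) (h : (img f).card ≤ 1) :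
    f = fun _ => f ⟨0, hd⟩ := by
  obtain ⟨v, hv⟩ := Finset.card_eq_one.1
    (le_antisymm h (Finset.card_pos.2 (img_nonempty hd f)))
  have hall : ∀ a, f a = v := fun a => by
    have h2 : f a ∈ img f := Finset.mem_image_of_mem f (Finset.mem_univ a)
    rw [hv, Finset.mem_singleton] at h2
    exact h2
  funext a
  rw [hall a, hall ⟨0, hd⟩]

lemma img_const (hd : 0 < d) (v : V) : img (fun _ : Fin d => v) = {v} := by
  rw [img]
  haveI : Nonempty (Fin d) := ⟨⟨0, hd⟩⟩
  exact Finset.image_const Finset.univ_nonempty v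

lemma filter_const_card (hd : 0 < d) (E : Finset V) (p : V → Prop) [DecidablePred p] :
    ((Fintype.piFinset fun _ : Fin d => E).filter
        fun f => (img f).card ≤ 1 ∧ p (f ⟨0, hd⟩)).card = (E.filter p).card := by
  have hset : ((Fintype.piFinset fun _ : Fin d => E).filter
        fun f => (img f).card ≤ 1 ∧ p (f ⟨0, hd⟩))
      = (E.filter p).image (fun v _ => v) := by
    ext f
    simp only [Finset.mem_filter, Finset.mem_image, mem_piFinset_iff]
    constructor
    · rintro ⟨hsub, hcard, hp⟩
      exact ⟨f ⟨0, hd⟩, ⟨hsub (Finset.mem_image_of_mem f (Finset.mem_univ _)), hp⟩,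
        (eq_const_of_card_le hd f hcard).symm⟩
    · rintro ⟨v, ⟨hv, hp⟩, rfl⟩
      refine ⟨?_, ?_, hp⟩
      · rw [img_const hd]
        simpa using hv
      · rw [img_const hd]; simp
  rw [hset, Finset.card_image_of_injective _ fun a b hab => congrFun hab ⟨0, hd⟩]

lemma fiber_sum (E : Finset V) (q : (Fin d → V) → Prop) [DecidablePred q] :
    ((Fintype.piFinset fun _ : Fin d => E).filter fun f => ¬(img f).card ≤ 1 ∧ q f).card
      = ∑ S ∈ E.powerset.filter fun S => 2 ≤ S.card, ((TS (d := d) S).filter q).card := by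
  rw [Finset.card_eq_sum_card_fiberwise
    (f := img) (t := E.powerset.filter fun S => 2 ≤ S.card) ?_]
  · refine Finset.sum_congr rfl fun S hS => ?_
    rw [Finset.mem_filter, Finset.mem_powerset] at hS
    congr 1
    ext g
    simp only [Finset.mem_filter, mem_piFinset_iff, TS, Finset.mem_univ, true_and]
    constructor
    · rintro ⟨⟨-, -, hq⟩, himg⟩
      exact ⟨himg, hq⟩
    · rintro ⟨himg, hq⟩
      refine ⟨⟨?_, ?_, hq⟩, himg⟩
      · rw [himg]; exact hS.1
      · rw [himg]; omega
  · intro f hf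
    rw [Finset.mem_coe, Finset.mem_filter, mem_piFinset_iff] at hf
    rw [Finset.mem_coe, Finset.mem_filter, Finset.mem_powerset]
    exact ⟨hf.1, by omega⟩

lemma TS_filter_chi' (hd : 0 < d) (hc : 0 < c) (χ : V → Fin c)
    (hdiv : ∀ k ∈ Finset.Icc 2 d, c ∣ k.factorial * stirling2 d k)
    (S : Finset V) (hS : 2 ≤ S.card) (i : Fin c) :
    ((TS (d := d) S).filter fun f => chi' hd hc χ f = i).card = (TS (d := d) S).card / c := by
  have hfe : (TS (d := d) S).filter (fun f => chi' hd hc χ f = i)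
      = (TS (d := d) S).filter fun f =>
          ((TS (d := d) S).filter fun g => ι g < ι f).card % c = i.val := by
    apply Finset.filter_congr
    intro f hf
    rw [TS, Finset.mem_filter] at hf
    have himg : img f = S := hf.2
    simp only [chi', himg]
    rw [if_neg (by omega)]
    rw [Fin.ext_iff]
  rw [hfe]
  exact rank_even ι ι_inj (TS S) i.val (dvd_card_TS hd hdiv S hS) i.isLt

lemma pow_eq (hd : 0 < d) (E : Finset V) :
    E.card ^ d = E.card
      + ∑ S ∈ E.powerset.filter fun S => 2 ≤ S.card, (TS (d := d) S).card := by
  rw [← Fintype.card_piFinset_const E d,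
    ← Finset.card_filter_add_card_filter_not
      (s := Fintype.piFinset fun _ : Fin d => E) (p := fun f => (img f).card ≤ 1)]
  congr 1
  · have h := filter_const_card hd E (fun _ => True)
    simpa using h
  · have h := fiber_sum E (fun _ : Fin d → V => True)
    simpa using h

lemma count_eq (hd : 0 < d) (hc : 0 < c) (χ : V → Fin c)
    (hdiv : ∀ k ∈ Finset.Icc 2 d, c ∣ k.factorial * stirling2 d k)
    (E : Finset V) (i : Fin c) :
    ((Fintype.piFinset fun _ : Fin d => E).filter fun f => chi' hd hc χ f = i).card
      = (E.filter fun v => χ v = i).card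
        + ∑ S ∈ E.powerset.filter fun S => 2 ≤ S.card, (TS (d := d) S).card / c := by
  rw [← Finset.card_filter_add_card_filter_not
      (s := (Fintype.piFinset fun _ : Fin d => E).filter fun f => chi' hd hc χ f = i)
      (p := fun f => (img f).card ≤ 1)]
  congr 1
  · rw [Finset.filter_filter]
    have heq : (Fintype.piFinset fun _ : Fin d => E).filter
          (fun f => chi' hd hc χ f = i ∧ (img f).card ≤ 1)
        = (Fintype.piFinset fun _ : Fin d => E).filter
          (fun f => (img f).card ≤ 1 ∧ χ (f ⟨0, hd⟩) = i) := by
      apply Finset.filter_congr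
      intro f hf
      constructor
      · rintro ⟨hchi, hcard⟩
        refine ⟨hcard, ?_⟩
        simp only [chi'] at hchi
        rwa [if_pos hcard] at hchi
      · rintro ⟨hcard, hchi⟩
        refine ⟨?_, hcard⟩
        simp only [chi']
        rwa [if_pos hcard]
    rw [heq, filter_const_card hd E (fun v => χ v = i)]
  · rw [Finset.filter_filter]
    have heq : (Fintype.piFinset fun _ : Fin d => E).filter
          (fun f => chi' hd hc χ f = i ∧ ¬(img f).card ≤ 1)
        = (Fintype.piFinset fun _ : Fin d => E).filter
          (fun f => ¬(img f).card ≤ 1 ∧ chi' hd hc χ f = i) := by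
      apply Finset.filter_congr
      intro f _
      exact and_comm
    rw [heq, fiber_sum E (fun f => chi' hd hc χ f = i)]
    refine Finset.sum_congr rfl fun S hS => ?_
    rw [Finset.mem_filter] at hS
    exact TS_filter_chi' hd hc χ hdiv S hS.2 i

lemma real_diff_eq (hd : 0 < d) (hc : 0 < c) (χ : V → Fin c)
    (hdiv : ∀ k ∈ Finset.Icc 2 d, c ∣ k.factorial * stirling2 d k)
    (E : Finset V) (i : Fin c) :
    (((Fintype.piFinset fun _ : Fin d => E).filter fun f => chi' hd hc χ f = i).card : ℝ)
        - ((Fintype.piFinset fun _ : Fin d => E).card : ℝ) / (c : ℝ)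
      = ((E.filter fun v => χ v = i).card : ℝ) - (E.card : ℝ) / (c : ℝ) := by
  have hc0 : (c : ℝ) ≠ 0 := Nat.cast_ne_zero.2 (by omega)
  have hsum : (∑ S ∈ E.powerset.filter fun S => 2 ≤ S.card,
        ((((TS (d := d) S).card / c : ℕ)) : ℝ))
      = (∑ S ∈ E.powerset.filter fun S => 2 ≤ S.card, ((TS (d := d) S).card : ℝ)) / c := by
    rw [Finset.sum_div]
    refine Finset.sum_congr rfl fun S hS => ?_
    rw [Finset.mem_filter] at hS
    exact Nat.cast_div (dvd_card_TS hd hdiv S hS.2) hc0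
  rw [Fintype.card_piFinset_const, count_eq hd hc χ hdiv E i]
  have hpow := pow_eq (d := d) hd E
  push_cast
  rw [hsum]
  have hpow' : ((E.card : ℝ)) ^ d = (E.card : ℝ)
      + ∑ S ∈ E.powerset.filter fun S => 2 ≤ S.card, ((TS (d := d) S).card : ℝ) := by
    exact_mod_cast congrArg (Nat.cast : ℕ → ℝ) hpow
  rw [hpow', add_div]
  ring

end Main

end SymAux

namespace SymAux

lemma abs_le_discCol {V' : Type} [Fintype V'] (H : Finset (Finset V')) {c : ℕ} (hc : 0 < c)
    (χ : V' → Fin c) {E : Finset V'} (hE : E ∈ H) (i : Fin c) :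
    |((E.filter fun v => χ v = i).card : ℝ) - (E.card : ℝ) / (c : ℝ)| ≤ discCol H c χ := by
  haveI : Nonempty (Fin c) := ⟨⟨0, hc⟩⟩
  rw [discCol]
  have h1 : |((E.filter fun v => χ v = i).card : ℝ) - (E.card : ℝ) / (c : ℝ)|
      ≤ ⨆ i : Fin c, |((E.filter fun v => χ v = i).card : ℝ) - (E.card : ℝ) / (c : ℝ)| :=
    le_ciSup (f := fun i : Fin c =>
        |((E.filter fun v => χ v = i).card : ℝ) - (E.card : ℝ) / (c : ℝ)|)
      (Set.Finite.bddAbove (Set.finite_range _)) i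
  refine h1.trans ?_
  have h2 : (⨆ i : Fin c, |((E.filter fun v => χ v = i).card : ℝ) - (E.card : ℝ) / (c : ℝ)|)
      = ⨆ _ : E ∈ H, ⨆ i : Fin c,
          |((E.filter fun v => χ v = i).card : ℝ) - (E.card : ℝ) / (c : ℝ)| :=
    (ciSup_pos (f := fun _ : E ∈ H => ⨆ i : Fin c,
      |((E.filter fun v => χ v = i).card : ℝ) - (E.card : ℝ) / (c : ℝ)|) hE).symm
  rw [h2]
  exact le_ciSup (f := fun E : Finset V' => ⨆ _ : E ∈ H, ⨆ i : Fin c,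
      |((E.filter fun v => χ v = i).card : ℝ) - (E.card : ℝ) / (c : ℝ)|)
    (Set.Finite.bddAbove (Set.finite_range _)) E

lemma discCol_nonneg {V' : Type} [Fintype V'] (H : Finset (Finset V')) {c : ℕ} (hc : 0 < c)
    (χ : V' → Fin c) : 0 ≤ discCol H c χ := by
  haveI : Nonempty (Fin c) := ⟨⟨0, hc⟩⟩
  rw [discCol]
  refine le_trans ?_ (le_ciSup (f := fun E : Finset V' => ⨆ _ : E ∈ H, ⨆ i : Fin c,
      |((E.filter fun v => χ v = i).card : ℝ) - (E.card : ℝ) / (c : ℝ)|)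
    (Set.Finite.bddAbove (Set.finite_range _)) (∅ : Finset V'))
  by_cases h : (∅ : Finset V') ∈ H
  · rw [ciSup_pos h]
    refine le_trans (abs_nonneg _) (le_ciSup (f := fun i : Fin c =>
        |(((∅ : Finset V').filter fun v => χ v = i).card : ℝ)
          - (((∅ : Finset V').card : ℕ) : ℝ) / (c : ℝ)|)
      (Set.Finite.bddAbove (Set.finite_range _)) (⟨0, hc⟩ : Fin c))
  · haveI : IsEmpty (PLift ((∅ : Finset V') ∈ H)) := ⟨fun hh => h hh.down⟩
    haveI : IsEmpty ((∅ : Finset V') ∈ H : Prop) := ⟨h⟩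
    rw [Real.iSup_of_isEmpty]

lemma discCol_le {V' : Type} [Fintype V'] (H : Finset (Finset V')) {c : ℕ} (hc : 0 < c)
    (χ : V' → Fin c) {B : ℝ} (hB : 0 ≤ B)
    (h : ∀ E ∈ H, ∀ i : Fin c,
      |((E.filter fun v => χ v = i).card : ℝ) - (E.card : ℝ) / (c : ℝ)| ≤ B) :
    discCol H c χ ≤ B := by
  haveI : Nonempty (Fin c) := ⟨⟨0, hc⟩⟩
  rw [discCol]
  refine ciSup_le fun E => ?_
  by_cases hE : E ∈ H
  · rw [ciSup_pos hE]
    exact ciSup_le fun i => h E hE i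
  · haveI : IsEmpty (E ∈ H : Prop) := ⟨hE⟩
    rw [Real.iSup_of_isEmpty]
    exact hB

end SymAux

/-- If `c ∣ k! ⬝ S(d,k)` for all `k ∈ {2,…,d}`, then every hypergraph `H` satisfies
`disc(Δ^d H, c) ≤ disc(H, c)`. -/
theorem stmt0 (c d : ℕ) (hc : 2 ≤ c) (hd : 1 ≤ d)
    (hdiv : ∀ k ∈ Finset.Icc 2 d, c ∣ k.factorial * stirling2 d k)
    (V : Type) [Fintype V] [DecidableEq V] (H : Finset (Finset V)) :
    disc (symProd H d) c ≤ disc H c := by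
  classical
  have hc0 : 0 < c := by omega
  haveI : Nonempty (V → Fin c) := ⟨fun _ => ⟨0, hc0⟩⟩
  rw [disc, disc]
  refine le_ciInf fun χ => ?_
  have key : discCol (symProd H d) c (SymAux.chi' hd hc0 χ) ≤ discCol H c χ := by
    refine SymAux.discCol_le _ hc0 _ (SymAux.discCol_nonneg H hc0 χ) ?_
    intro E' hE' i
    rw [symProd, Finset.mem_image] at hE'
    obtain ⟨E, hE, rfl⟩ := hE'
    rw [SymAux.real_diff_eq hd hc0 χ hdiv E i]
    exact SymAux.abs_le_discCol H hc0 χ hE i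
  exact le_trans (ciInf_le (Set.Finite.bddBelow (Set.finite_range _))
    (SymAux.chi' hd hc0 χ)) key
end

section
/- Let c, d be natural numbers with c ≥ 2 and d ≥ 2, and suppose there exists k ∈ {2,...,d} such that c does not divide k!·S(d,k), where S(d,k) is the Stirling number of the second kind. Then for every K₀ ∈ ℕ there exists a hypergraph K with disc(K, c) ≥ K₀ and disc(Δ^d K, c) ≥ (1/(3·k!)) · disc(K, c)^k. -/
set_option linter.unusedSectionVars false
set_option maxHeartbeats 1000000



-- auxiliary lemmas

lemma stirling2_zero_right {d : ℕ} (hd : 0 < d) : stirling2 d 0 = 0 := by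
  cases d with
  | zero => omega
  | succ d => rfl

lemma stirling2_eq_zero_of_lt : ∀ {d k : ℕ}, d < k → stirling2 d k = 0 := by
  intro d
  induction d with
  | zero =>
    intro k hk
    cases k with
    | zero => omega
    | succ k => rfl
  | succ d ih =>
    intro k hk
    cases k with
    | zero => omega
    | succ k =>
      show (k + 1) * stirling2 d (k + 1) + stirling2 d k = 0
      rw [ih (by omega), ih (by omega)]
      ring

/-- number of surjections from a `d`-set onto a `j`-set -/
def nsurj (d j : ℕ) : ℕ := j.factorial * stirling2 d j

lemma nsurj_eq_zero_of_lt {d j : ℕ} (h : d < j) : nsurj d j = 0 := by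
  rw [nsurj, stirling2_eq_zero_of_lt h, Nat.mul_zero]

lemma nsurj_zero_right {d : ℕ} (hd : 0 < d) : nsurj d 0 = 0 := by
  rw [nsurj, stirling2_zero_right hd, Nat.mul_zero]

lemma nsurj_succ_left (d x : ℕ) :
    nsurj (d + 1) (x + 1) = (x + 1) * nsurj d (x + 1) + (x + 1) * nsurj d x := by
  show (x+1).factorial * ((x + 1) * stirling2 d (x + 1) + stirling2 d x) = _
  rw [nsurj, nsurj, Nat.factorial_succ]
  ring

lemma pow_eq_sum_choose_nsurj (d t : ℕ) :
    t ^ d = ∑ s ∈ Finset.range (t + 1), t.choose s * nsurj d s := by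
  induction d with
  | zero =>
    rw [Finset.sum_range_succ' _ t]
    have h1 : ∀ x ∈ Finset.range t, t.choose (x+1) * nsurj 0 (x+1) = 0 := by
      intro x hx
      rw [nsurj_eq_zero_of_lt (by omega), Nat.mul_zero]
    rw [Finset.sum_congr rfl h1]
    simp [nsurj, stirling2]
  | succ d ih =>
    refine Eq.symm ?_
    have key : ∀ x, t.choose (x+1) * nsurj (d+1) (x+1)
        = (x+1) * (t.choose (x+1) * nsurj d (x+1)) + (t - x) * (t.choose x * nsurj d x) := by
      intro x
      rw [nsurj_succ_left]
      have h1 : t.choose (x+1) * ((x+1) * nsurj d x) = (t.choose (x+1) * (x+1)) * nsurj d x := by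
        ring
      rw [Nat.mul_add, h1, Nat.choose_succ_right_eq t x]
      ring
    calc ∑ s ∈ Finset.range (t + 1), t.choose s * nsurj (d+1) s
        = (∑ x ∈ Finset.range t, t.choose (x+1) * nsurj (d+1) (x+1))
            + t.choose 0 * nsurj (d+1) 0 := Finset.sum_range_succ' _ t
      _ = ∑ x ∈ Finset.range t, ((x+1) * (t.choose (x+1) * nsurj d (x+1))
            + (t - x) * (t.choose x * nsurj d x)) := by
          rw [nsurj_zero_right (by omega), Finset.sum_congr rfl (fun x _ => key x)]
          ring
      _ = (∑ x ∈ Finset.range t, (x+1) * (t.choose (x+1) * nsurj d (x+1)))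
            + ∑ x ∈ Finset.range t, (t - x) * (t.choose x * nsurj d x) :=
          Finset.sum_add_distrib
      _ = (∑ s ∈ Finset.range (t+1), s * (t.choose s * nsurj d s))
            + ∑ s ∈ Finset.range (t+1), (t - s) * (t.choose s * nsurj d s) := by
          rw [Finset.sum_range_succ' (fun s => s * (t.choose s * nsurj d s)) t,
            Finset.sum_range_succ (fun s => (t - s) * (t.choose s * nsurj d s)) t]
          simp
      _ = ∑ s ∈ Finset.range (t+1), t * (t.choose s * nsurj d s) := by
          rw [← Finset.sum_add_distrib]
          refine Finset.sum_congr rfl (fun s hs => ?_)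
          have : s ≤ t := by
            have := Finset.mem_range.mp hs; omega
          rw [← Nat.add_mul]
          congr 1
          omega
      _ = t ^ d * t := by
          rw [← Finset.mul_sum, ← ih]
          ring
      _ = t ^ (d + 1) := (pow_succ t d).symm

section counting

variable {V : Type} [DecidableEq V] [Fintype V]

/-- tuples whose image is exactly `T` -/
def surjTo (d : ℕ) (T : Finset V) : Finset (Fin d → V) :=
  Finset.univ.filter (fun x => Finset.image x Finset.univ = T)

lemma filter_piFinset_card (d : ℕ) (S : Finset V) (p : (Fin d → V) → Prop) [DecidablePred p] :
    ((Fintype.piFinset fun _ : Fin d => S).filter p).card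
      = ∑ T ∈ S.powerset, ((surjTo d T).filter p).card := by
  rw [Finset.card_eq_sum_card_fiberwise
    (f := fun x => Finset.image x Finset.univ) (t := S.powerset)]
  · refine Finset.sum_congr rfl (fun T hT => ?_)
    congr 1
    ext x
    simp only [Finset.mem_filter, surjTo, Fintype.mem_piFinset, Finset.mem_univ, true_and]
    constructor
    · rintro ⟨⟨hx, hp⟩, him⟩
      exact ⟨him, hp⟩
    · rintro ⟨him, hp⟩
      refine ⟨⟨fun i => ?_, hp⟩, him⟩
      have : x i ∈ Finset.image x Finset.univ := Finset.mem_image_of_mem x (Finset.mem_univ i)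
      rw [him] at this
      exact Finset.mem_powerset.mp hT this
  · intro x hx
    simp only [Finset.mem_coe] at hx ⊢
    rw [Finset.mem_filter, Fintype.mem_piFinset] at hx
    rw [Finset.mem_powerset]
    intro v hv
    rw [Finset.mem_image] at hv
    obtain ⟨i, _, rfl⟩ := hv
    exact hx.1 i

lemma piFinset_card (d : ℕ) (S : Finset V) :
    (Fintype.piFinset fun _ : Fin d => S).card = S.card ^ d := by
  rw [Fintype.card_piFinset]
  simp

lemma surjTo_card (d : ℕ) (T : Finset V) : (surjTo d T).card = nsurj d T.card := by
  induction T using Finset.strongInduction with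
  | _ T ih =>
    have h0 : (Fintype.piFinset fun _ : Fin d => T).card
        = ∑ U ∈ T.powerset, (surjTo d U).card := by
      have := filter_piFinset_card (V := V) d T (fun _ => True)
      simpa using this
    have h1 : T.card ^ d = ∑ U ∈ T.powerset, (surjTo d U).card := by
      rw [← piFinset_card d T, h0]
    have hTmem : T ∈ T.powerset := Finset.mem_powerset_self T
    have h2 : ∑ U ∈ T.powerset, (surjTo d U).card
        = ∑ U ∈ T.powerset.erase T, (surjTo d U).card + (surjTo d T).card := by
      rw [Finset.sum_erase_add _ _ hTmem]
    have h3 : ∀ U ∈ T.powerset.erase T, (surjTo d U).card = nsurj d U.card := by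
      intro U hU
      rw [Finset.mem_erase, Finset.mem_powerset] at hU
      exact ih U (Finset.ssubset_iff_subset_ne.mpr ⟨hU.2, hU.1⟩)
    have h4 : T.card ^ d = ∑ U ∈ T.powerset, nsurj d U.card := by
      rw [Finset.sum_powerset_apply_card (fun m => nsurj d m)]
      rw [pow_eq_sum_choose_nsurj d T.card]
      exact Finset.sum_congr rfl (fun s _ => smul_eq_mul ..)
    have h5 : ∑ U ∈ T.powerset, nsurj d U.card
        = ∑ U ∈ T.powerset.erase T, nsurj d U.card + nsurj d T.card := by
      rw [Finset.sum_erase_add _ _ hTmem]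
    have h6 : ∑ U ∈ T.powerset.erase T, (surjTo d U).card
        = ∑ U ∈ T.powerset.erase T, nsurj d U.card := Finset.sum_congr rfl h3
    omega

end counting

section ramsey

/-- pre-homogeneous sequences: colors of `(j+1)`-sets determined by their minimum -/
lemma ramsey_pre (j r : ℕ) (hr : 0 < r)
    (IH : ∀ m : ℕ, ∃ N : ℕ, ∀ {α : Type} [LinearOrder α] (V : Finset α)
      (f : Finset α → Fin r), N ≤ V.card →
      ∃ W, W ⊆ V ∧ W.card = m ∧
        ∀ T, T ⊆ W → T.card = j → ∀ U, U ⊆ W → U.card = j → f T = f U) :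
    ∀ q : ℕ, ∃ N : ℕ, ∀ {α : Type} [LinearOrder α] (V : Finset α)
      (f : Finset α → Fin r), N ≤ V.card →
      ∃ (s : Finset α) (c : α → Fin r), s ⊆ V ∧ s.card = q ∧
        ∀ T, T ⊆ s → T.card = j + 1 → ∀ hT : T.Nonempty, f T = c (T.min' hT) := by
  intro q
  induction q with
  | zero =>
    refine ⟨0, fun {α} _ V f _ => ⟨∅, fun _ => ⟨0, hr⟩, Finset.empty_subset V, Finset.card_empty, ?_⟩⟩
    intro T hT hcard hne
    rw [Finset.subset_empty.mp hT] at hcard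
    simp at hcard
  | succ q ihq =>
    obtain ⟨Nq, hPq⟩ := ihq
    obtain ⟨NR, hR⟩ := IH Nq
    refine ⟨NR + 1, ?_⟩
    intro α _ V f hX
    have hVne : V.Nonempty := Finset.card_pos.mp (by omega)
    set a := V.min' hVne with ha
    have haV : a ∈ V := V.min'_mem hVne
    set V' := V.erase a with hV'
    have hV'card : NR ≤ V'.card := by
      rw [hV', Finset.card_erase_of_mem haV]; omega
    set g : Finset α → Fin r := fun T => f (insert a T) with hg
    obtain ⟨W, hWV', hWcard, hWhom⟩ := hR V' g hV'card
    obtain ⟨s, c, hsW, hscard, hsprop⟩ := hPq W f (le_of_eq hWcard.symm)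
    have haW : a ∉ W := fun h => (Finset.notMem_erase a V) (hWV' h)
    have has : a ∉ s := fun h => haW (hsW h)
    set v : Fin r := if h : ∃ T₀, T₀ ⊆ W ∧ T₀.card = j then g h.choose else ⟨0, hr⟩ with hv
    refine ⟨insert a s, Function.update c a v, ?_, ?_, ?_⟩
    · intro x hx
      rcases Finset.mem_insert.mp hx with rfl | hx
      · exact haV
      · exact Finset.erase_subset a V (hWV' (hsW hx))
    · rw [Finset.card_insert_of_notMem has, hscard]
    · intro T hTs hTcard hTne
      by_cases haT : a ∈ T
      · have hmin : T.min' hTne = a := by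
          refine le_antisymm (Finset.min'_le T a haT) ?_
          have h1 : T.min' hTne ∈ T := T.min'_mem hTne
          have h2 : T.min' hTne ∈ V := by
            rcases Finset.mem_insert.mp (hTs h1) with h | h
            · rw [h]; exact haV
            · exact Finset.erase_subset a V (hWV' (hsW h))
          exact V.min'_le _ h2
        rw [hmin, Function.update_self]
        set T' := T.erase a with hT'
        have hT'W : T' ⊆ W := by
          intro x hx
          obtain ⟨hxa, hxT⟩ := Finset.mem_erase.mp hx
          rcases Finset.mem_insert.mp (hTs hxT) with h | h
          · exact absurd h hxa
          · exact hsW h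
        have hT'card : T'.card = j := by
          rw [hT', Finset.card_erase_of_mem haT, hTcard]
          omega
        have hex : ∃ T₀, T₀ ⊆ W ∧ T₀.card = j := ⟨T', hT'W, hT'card⟩
        have hco := hex.choose_spec
        have : g T' = g hex.choose := hWhom T' hT'W hT'card hex.choose hco.1 hco.2
        rw [hv, dif_pos hex, ← this, hg]
        simp only []
        rw [Finset.insert_erase haT]
      · have hTsub : T ⊆ s := by
          intro x hx
          rcases Finset.mem_insert.mp (hTs hx) with h | h
          · exact absurd (h ▸ hx) haT
          · exact h
        have h1 := hsprop T hTsub hTcard hTne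
        have h2 : T.min' hTne ≠ a := fun h => haT (h ▸ T.min'_mem hTne)
        rw [h1, Function.update_of_ne h2]

theorem ramsey_uniform (j r : ℕ) (hr : 0 < r) :
    ∀ m : ℕ, ∃ N : ℕ, ∀ {α : Type} [LinearOrder α] (V : Finset α)
      (f : Finset α → Fin r), N ≤ V.card →
      ∃ W, W ⊆ V ∧ W.card = m ∧
        ∀ T, T ⊆ W → T.card = j → ∀ U, U ⊆ W → U.card = j → f T = f U := by
  induction j with
  | zero =>
    intro m
    refine ⟨m, ?_⟩
    intro α _ V f hm
    obtain ⟨W, hWV, hWcard⟩ := Finset.exists_subset_card_eq hm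
    refine ⟨W, hWV, hWcard, ?_⟩
    intro T _ hT U _ hU
    rw [Finset.card_eq_zero.mp hT, Finset.card_eq_zero.mp hU]
  | succ j ihj =>
    intro m
    obtain ⟨N, hN⟩ := ramsey_pre j r hr ihj (r * m + 1)
    refine ⟨N, ?_⟩
    intro α _ V f hX
    obtain ⟨s, c, hsV, hscard, hsprop⟩ := hN V f hX
    have hfib : ∃ i : Fin r, m ≤ (s.filter (fun x => c x = i)).card := by
      by_contra hcon
      push_neg at hcon
      have hsum : ∑ i : Fin r, (s.filter (fun x => c x = i)).card = s.card :=
        (Finset.card_eq_sum_card_fiberwise (fun x _ => Finset.mem_univ (c x))).symm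
      have hle : ∑ i : Fin r, (s.filter (fun x => c x = i)).card ≤ r * (m - 1) := by
        calc ∑ i : Fin r, (s.filter (fun x => c x = i)).card
            ≤ ∑ _i : Fin r, (m - 1) := Finset.sum_le_sum (fun i _ => by
              have := hcon i
              omega)
          _ = r * (m - 1) := by rw [Finset.sum_const, Finset.card_univ, Fintype.card_fin, smul_eq_mul]
      have hm0 : 0 < m := by
        by_contra hm
        have := hcon ⟨0, hr⟩
        omega
      rw [hsum, hscard] at hle
      have h2 : r * (m-1) ≤ r * m := Nat.mul_le_mul_left r (by omega)
      omega
    obtain ⟨i, hi⟩ := hfib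
    obtain ⟨W, hWfib, hWcard⟩ := Finset.exists_subset_card_eq hi
    have hWs : W ⊆ s := hWfib.trans (Finset.filter_subset _ s)
    refine ⟨W, hWs.trans hsV, hWcard, ?_⟩
    intro T hTW hTcard U hUW hUcard
    have hTne : T.Nonempty := Finset.card_pos.mp (by omega)
    have hUne : U.Nonempty := Finset.card_pos.mp (by omega)
    have hTval : c (T.min' hTne) = i := by
      have : T.min' hTne ∈ W := hTW (T.min'_mem hTne)
      exact (Finset.mem_filter.mp (hWfib this)).2
    have hUval : c (U.min' hUne) = i := by
      have : U.min' hUne ∈ W := hUW (U.min'_mem hUne)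
      exact (Finset.mem_filter.mp (hWfib this)).2
    rw [hsprop T (hTW.trans hWs) hTcard hTne, hsprop U (hUW.trans hWs) hUcard hUne,
      hTval, hUval]

theorem ramsey_multi (l r : ℕ) (hr : 0 < r) :
    ∀ m : ℕ, ∃ N : ℕ, ∀ {α : Type} [LinearOrder α] (V : Finset α)
      (f : Finset α → Fin r), N ≤ V.card →
      ∃ W, W ⊆ V ∧ W.card = m ∧
        ∀ j, j ≤ l → ∀ T, T ⊆ W → T.card = j → ∀ U, U ⊆ W → U.card = j → f T = f U := by
  induction l with
  | zero =>
    intro m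
    obtain ⟨N, hN⟩ := ramsey_uniform 0 r hr m
    refine ⟨N, ?_⟩
    intro α _ V f hX
    obtain ⟨W, h1, h2, h3⟩ := hN V f hX
    exact ⟨W, h1, h2, fun j hj => by
      interval_cases j
      exact h3⟩
  | succ l ihl =>
    intro m
    obtain ⟨N₁, hN₁⟩ := ihl m
    obtain ⟨N₂, hN₂⟩ := ramsey_uniform (l + 1) r hr N₁
    refine ⟨N₂, ?_⟩
    intro α _ V f hX
    obtain ⟨W₂, hW₂V, hW₂card, hW₂hom⟩ := hN₂ V f hX
    obtain ⟨W, hWW₂, hWcard, hWhom⟩ := hN₁ W₂ f (le_of_eq hW₂card.symm)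
    refine ⟨W, hWW₂.trans hW₂V, hWcard, ?_⟩
    intro j hj T hTW hTcard U hUW hUcard
    rcases Nat.lt_or_ge j (l + 1) with h | h
    · exact hWhom j (by omega) T hTW hTcard U hUW hUcard
    · have : j = l + 1 := by omega
      subst this
      exact hW₂hom T (hTW.trans hWW₂) hTcard U (hUW.trans hWW₂) hUcard

end ramsey

section plumbing

variable {V : Type} (H : Finset (Finset V)) (c : ℕ) (χ : V → Fin c)

/-- the deviation of color `i` on edge `E` -/
noncomputable def dva (c : ℕ) (χ : V → Fin c) (E : Finset V) (i : Fin c) : ℝ :=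
  |((E.filter fun v => χ v = i).card : ℝ) - (E.card : ℝ) / (c : ℝ)|

lemma dva_nonneg (E : Finset V) (i : Fin c) : 0 ≤ dva c χ E i := abs_nonneg _

lemma dva_le_card (E : Finset V) (i : Fin c) : dva c χ E i ≤ (E.card : ℝ) := by
  rw [dva, abs_le]
  have h1 : ((E.filter fun v => χ v = i).card : ℝ) ≤ (E.card : ℝ) := by
    exact_mod_cast Finset.card_filter_le E _
  have h2 : (0:ℝ) ≤ ((E.filter fun v => χ v = i).card : ℝ) := Nat.cast_nonneg _
  have h4 : (0:ℝ) ≤ (E.card : ℝ) := Nat.cast_nonneg _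
  rcases Nat.eq_zero_or_pos c with rfl | hc
  · simp only [Nat.cast_zero, div_zero]
    constructor <;> linarith
  have hc' : (1:ℝ) ≤ (c:ℝ) := by exact_mod_cast hc
  have h3 : (0:ℝ) ≤ (E.card : ℝ) / (c:ℝ) := by positivity
  have h5 : (E.card : ℝ) / (c:ℝ) ≤ (E.card : ℝ) := by
    apply div_le_self h4 hc'
  constructor <;> linarith

lemma discCol_eq : discCol H c χ = ⨆ E, ⨆ (_ : E ∈ H), ⨆ i : Fin c, dva c χ E i := rfl

lemma discCol_le {B : ℝ} (hB : 0 ≤ B) (hBe : ∀ E ∈ H, (E.card : ℝ) ≤ B) :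
    discCol H c χ ≤ B := by
  rw [discCol_eq]
  refine Real.iSup_le (fun E => Real.iSup_le (fun hE => Real.iSup_le (fun i => ?_) hB) hB) hB
  exact le_trans (dva_le_card c χ E i) (hBe E hE)

lemma le_discCol {B : ℝ} (hBe : ∀ E ∈ H, (E.card : ℝ) ≤ B) {E : Finset V} (hE : E ∈ H)
    (i : Fin c) : dva c χ E i ≤ discCol H c χ := by
  rw [discCol_eq]
  have hB : 0 ≤ B := le_trans (Nat.cast_nonneg _) (hBe E hE)
  have step1 : dva c χ E i ≤ ⨆ i : Fin c, dva c χ E i :=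
    le_ciSup (Set.Finite.bddAbove (Set.finite_range _)) i
  have step2 : (⨆ i : Fin c, dva c χ E i) = ⨆ (_ : E ∈ H), ⨆ i : Fin c, dva c χ E i :=
    (ciSup_pos (f := fun _ : E ∈ H => ⨆ i : Fin c, dva c χ E i) hE).symm
  have step3 : (⨆ (_ : E ∈ H), ⨆ i : Fin c, dva c χ E i)
      ≤ ⨆ E, ⨆ (_ : E ∈ H), ⨆ i : Fin c, dva c χ E i := by
    apply le_ciSup (f := fun E => ⨆ (_ : E ∈ H), ⨆ i : Fin c, dva c χ E i) ?_ E
    refine ⟨B, ?_⟩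
    rintro x ⟨E', rfl⟩
    refine Real.iSup_le (fun hE' => Real.iSup_le (fun i' => ?_) hB) hB
    exact le_trans (dva_le_card c χ E' i') (hBe E' hE')
  calc dva c χ E i ≤ ⨆ i : Fin c, dva c χ E i := step1
    _ = ⨆ (_ : E ∈ H), ⨆ i : Fin c, dva c χ E i := step2
    _ ≤ _ := step3

lemma discCol_nonneg {B : ℝ} (hBe : ∀ E ∈ H, (E.card : ℝ) ≤ B) (hH : H.Nonempty)
    (hc : 0 < c) : 0 ≤ discCol H c χ := by
  obtain ⟨E, hE⟩ := hH
  have : Nonempty (Fin c) := ⟨⟨0, hc⟩⟩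
  exact le_trans (dva_nonneg c χ E this.some) (le_discCol H c χ hBe hE this.some)

lemma le_disc (hc : 0 < c) {v : ℝ} (h : ∀ χ : V → Fin c, v ≤ discCol H c χ) :
    v ≤ disc H c := by
  have : Nonempty (Fin c) := ⟨⟨0, hc⟩⟩
  exact le_ciInf h

lemma disc_le_of_bdd {B : ℝ} (hBe : ∀ E ∈ H, (E.card : ℝ) ≤ B) (hH : H.Nonempty)
    (hc : 0 < c) (χ₀ : V → Fin c) : disc H c ≤ discCol H c χ₀ := by
  apply ciInf_le
  exact ⟨0, by rintro x ⟨χ, rfl⟩; exact discCol_nonneg H c χ hBe hH hc⟩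

end plumbing

/-- If `c` does not divide `k! ⬝ S(d,k)` for some `k ∈ {2,…,d}`, then there are
hypergraphs `K` of arbitrarily large discrepancy with
`disc(Δ^d K, c) ≥ disc(K,c)^k / (3 ⬝ k!)`. -/
theorem stmt1 (c d k : ℕ) (hc : 2 ≤ c) (hd : 2 ≤ d)
    (hk : k ∈ Finset.Icc 2 d) (hdiv : ¬ c ∣ k.factorial * stirling2 d k) :
    ∀ K₀ : ℕ, ∃ (n : ℕ) (K : Finset (Finset (Fin n))),
      (K₀ : ℝ) ≤ disc K c ∧
      (1 / (3 * (k.factorial : ℝ))) * disc K c ^ k ≤ disc (symProd K d) c := by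
  obtain ⟨hk2, hkd⟩ := Finset.mem_Icc.mp hk
  intro K₀
  haveI : Nonempty (Fin c) := ⟨⟨0, by omega⟩⟩
  set A := d ^ d with hA
  obtain ⟨M, hMdef⟩ : ∃ M : ℕ, 2*K₀ + 5*(k*k) + 8*c*A*d*d + d + 2^d*c*(d+1) + 2*d + 2 = M :=
    ⟨_, rfl⟩
  -- abstract the nonlinear summands so that `omega` can be used
  obtain ⟨q1, hq1⟩ : ∃ q, 5*(k*k) = q := ⟨_, rfl⟩
  obtain ⟨q2, hq2⟩ : ∃ q, 8*c*A*d*d = q := ⟨_, rfl⟩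
  obtain ⟨q3, hq3⟩ : ∃ q, 2^d*c*(d+1) = q := ⟨_, rfl⟩
  rw [hq1, hq2, hq3] at hMdef
  have hMq1 : q1 ≤ M := by omega
  have hMq2d : q2 + d ≤ M := by omega
  have hMq3d : d + q3 ≤ M := by omega
  have hM2K : 2 * K₀ ≤ M := by omega
  have hM2d : 2 * d ≤ M := by omega
  have hMk : 2 * k ≤ M := by omega
  have hM1 : 1 ≤ M := by omega
  have hMd : d ≤ M := by omega
  set γ := (Fin c → Fin (A + 1)) with hγ
  have hr : 0 < Fintype.card γ := Fintype.card_pos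
  obtain ⟨N, hN⟩ := ramsey_multi d (Fintype.card γ) hr M
  set n := N + c * M with hn
  set K := Finset.powersetCard M (Finset.univ : Finset (Fin n)) with hK
  have hKmem : ∀ E : Finset (Fin n), E ∈ K ↔ E.card = M := fun E =>
    Finset.mem_powersetCard_univ
  have hcardn : (Finset.univ : Finset (Fin n)).card = n := by
    rw [Finset.card_univ, Fintype.card_fin]
  have hKne : K.Nonempty := by
    obtain ⟨E, _, hEcard⟩ := Finset.exists_subset_card_eq
      (show M ≤ (Finset.univ : Finset (Fin n)).card by
        rw [hcardn, hn]
        have : M ≤ c * M := Nat.le_mul_of_pos_left M (by omega)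
        omega)
    exact ⟨E, (hKmem E).mpr hEcard⟩
  have hKcard : ∀ E ∈ K, (E.card : ℝ) ≤ (M : ℝ) := fun E hE =>
    le_of_eq (by rw [(hKmem E).mp hE])
  -- upper bound on disc K c
  have hdisc_ub : disc K c ≤ (M : ℝ) := by
    refine le_trans (disc_le_of_bdd K c hKcard hKne (by omega) (fun _ => ⟨0, by omega⟩)) ?_
    exact discCol_le K c _ (Nat.cast_nonneg M) hKcard
  -- lower bound on disc K c
  have hdisc_lb2 : (M : ℝ) / 2 ≤ disc K c := by
    refine le_disc K c (by omega) (fun χ => ?_)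
    have hfib : ∃ i : Fin c, M ≤ (Finset.univ.filter (fun v => χ v = i)).card := by
      by_contra hcon
      push_neg at hcon
      have hsum : ∑ i : Fin c, (Finset.univ.filter (fun v => χ v = i)).card
          = (Finset.univ : Finset (Fin n)).card :=
        (Finset.card_eq_sum_card_fiberwise (fun x _ => Finset.mem_univ (χ x))).symm
      have hle : ∑ i : Fin c, (Finset.univ.filter (fun v => χ v = i)).card ≤ c * (M - 1) := by
        calc ∑ i : Fin c, (Finset.univ.filter (fun v => χ v = i)).card
            ≤ ∑ _i : Fin c, (M - 1) := Finset.sum_le_sum (fun i _ => by have := hcon i; omega)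
          _ = c * (M - 1) := by
              rw [Finset.sum_const, Finset.card_univ, Fintype.card_fin, smul_eq_mul]
      rw [hsum, hcardn] at hle
      have h2 : c * (M - 1) + c ≤ c * M := by
        have : c * (M - 1 + 1) = c * (M-1) + c := by ring
        rw [← this]
        exact Nat.mul_le_mul_left c (by omega)
      omega
    obtain ⟨i, hi⟩ := hfib
    obtain ⟨E, hEfib, hEcard⟩ := Finset.exists_subset_card_eq hi
    have hEK : E ∈ K := (hKmem E).mpr hEcard
    have hEfilter : E.filter (fun v => χ v = i) = E :=
      Finset.filter_true_of_mem (fun v hv => (Finset.mem_filter.mp (hEfib hv)).2)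
    have hdva : dva c χ E i = (M : ℝ) - (M : ℝ) / c := by
      rw [dva, hEfilter, hEcard]
      rw [abs_of_nonneg]
      have h1 : (M : ℝ) / c ≤ (M : ℝ) / 1 := by
        apply div_le_div_of_nonneg_left (Nat.cast_nonneg M) (by norm_num)
        exact_mod_cast (by omega : 1 ≤ c)
      simp at h1
      linarith
    have := le_discCol K c χ hKcard hEK i
    rw [hdva] at this
    refine le_trans ?_ this
    have hMc : (M : ℝ) / c ≤ (M : ℝ) / 2 := by
      apply div_le_div_of_nonneg_left (Nat.cast_nonneg M) (by norm_num)
      exact_mod_cast hc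
    linarith
  have hdisc_lb : (K₀ : ℝ) ≤ disc K c := by
    refine le_trans ?_ hdisc_lb2
    have : (2 * K₀ : ℝ) ≤ (M : ℝ) := by exact_mod_cast hM2K
    push_cast at this ⊢
    linarith
  have hdisc_nonneg : 0 ≤ disc K c := le_trans (Nat.cast_nonneg K₀) hdisc_lb
  -- main lower bound for the symmetric product
  have hsym : (M : ℝ) ^ k / (3 * k.factorial) ≤ disc (symProd K d) c := by
    refine le_disc _ c (by omega) (fun χ => ?_)
    have hSPcard : ∀ E ∈ symProd K d, (E.card : ℝ) ≤ ((M : ℝ) ^ d) := by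
      intro E hE
      obtain ⟨S, hS, rfl⟩ := Finset.mem_image.mp hE
      rw [piFinset_card d S, (hKmem S).mp hS]
      push_cast
      exact le_refl _
    set aC : Fin c → Finset (Fin n) → ℕ :=
      fun i T => ((surjTo d T).filter (fun x => χ x = i)).card with haC
    have haCle : ∀ i T, aC i T ≤ nsurj d T.card := fun i T => by
      rw [← surjTo_card]
      exact Finset.card_filter_le _ _
    have hnsurj_le : ∀ j, j ≤ d → nsurj d j ≤ A := by
      intro j hj
      have h0 : (Finset.univ : Finset (Fin j)).card = j := by
        rw [Finset.card_univ, Fintype.card_fin]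
      have h1 : nsurj d j = (surjTo d (Finset.univ : Finset (Fin j))).card := by
        rw [surjTo_card, h0]
      have h2 : (surjTo d (Finset.univ : Finset (Fin j))).card
          ≤ Fintype.card (Fin d → Fin j) := by
        rw [← Finset.card_univ]
        exact le_trans (Finset.card_filter_le _ _) (le_refl _)
      have h3 : Fintype.card (Fin d → Fin j) = j ^ d := by
        rw [Fintype.card_fun, Fintype.card_fin, Fintype.card_fin]
      rw [h1, hA]
      rw [h3] at h2
      exact le_trans h2 (Nat.pow_le_pow_left hj d)
    have haCA : ∀ i T, T.card ≤ d → aC i T ≤ A :=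
      fun i T h => le_trans (haCle i T) (hnsurj_le _ h)
    set F : Finset (Fin n) → γ := fun T i =>
      ⟨min (aC i T) A, by have := Nat.min_le_right (aC i T) A; omega⟩ with hF
    set f : Finset (Fin n) → Fin (Fintype.card γ) :=
      fun T => (Fintype.equivFin γ) (F T) with hf
    obtain ⟨W, -, hWcard, hWhom⟩ := hN Finset.univ f (by rw [hcardn]; omega)
    have hWK : W ∈ K := (hKmem W).mpr hWcard
    have hTf : ∀ j : ℕ, j ≤ d → ∃ T, T ⊆ W ∧ T.card = j := fun j hj =>
      Finset.exists_subset_card_eq (by rw [hWcard]; omega)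
    set α : Fin c → ℕ → ℕ :=
      fun i j => if h : j ≤ d then aC i (hTf j h).choose else 0 with hα
    have hhom : ∀ (i : Fin c) (T : Finset (Fin n)), T ⊆ W → T.card ≤ d →
        aC i T = α i T.card := by
      intro i T hTW hTd
      simp only [hα, dif_pos hTd]
      obtain ⟨h1, h2⟩ := (hTf T.card hTd).choose_spec
      have heq := hWhom T.card hTd T hTW rfl _ h1 h2
      have hFeq : F T = F (hTf T.card hTd).choose := (Fintype.equivFin γ).injective heq
      have := congrFun hFeq i
      rw [hF] at this
      simp only [Fin.mk.injEq] at this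
      have hb1 : aC i T ≤ A := haCA i T hTd
      have hb2 : aC i (hTf T.card hTd).choose ≤ A := by
        refine haCA i _ ?_
        rw [h2]; exact hTd
      omega
    have hαle : ∀ i j, j ≤ d → α i j ≤ nsurj d j := by
      intro i j hj
      simp only [hα, dif_pos hj]
      have := haCle i (hTf j hj).choose
      rw [(hTf j hj).choose_spec.2] at this
      exact this
    have hsum_col : ∀ j, j ≤ d → ∑ i : Fin c, α i j = nsurj d j := by
      intro j hj
      obtain ⟨h1, h2⟩ := (hTf j hj).choose_spec
      have : ∀ i : Fin c, α i j = aC i (hTf j hj).choose := by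
        intro i; simp only [hα, dif_pos hj]
      rw [Finset.sum_congr rfl (fun i _ => this i)]
      rw [haC]
      have hps : ∑ i : Fin c, ((surjTo d (hTf j hj).choose).filter (fun x => χ x = i)).card
          = (surjTo d (hTf j hj).choose).card :=
        (Finset.card_eq_sum_card_fiberwise (fun x _ => Finset.mem_univ (χ x))).symm
      rw [hps, surjTo_card, h2]
    set Epr := Fintype.piFinset (fun _ : Fin d => W) with hEpr
    have hEprK : Epr ∈ symProd K d := Finset.mem_image.mpr ⟨W, hWK, rfl⟩
    have hEprcard : Epr.card = M ^ d := by rw [hEpr, piFinset_card, hWcard]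
    have hcnt : ∀ i : Fin c, (Epr.filter (fun x => χ x = i)).card
        = ∑ m ∈ Finset.range (d + 1), M.choose m * α i m := by
      intro i
      have h1 := filter_piFinset_card d W (fun x => χ x = i)
      set g : ℕ → ℕ := fun m => if m ≤ d then α i m else 0 with hg
      have h2 : ∀ T ∈ W.powerset, ((surjTo d T).filter (fun x => χ x = i)).card = g T.card := by
        intro T hT
        rw [Finset.mem_powerset] at hT
        by_cases hTd : T.card ≤ d
        · rw [hg]
          simp only [if_pos hTd]
          exact hhom i T hT hTd
        · rw [hg]
          simp only [if_neg hTd]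
          have := haCle i T
          rw [nsurj_eq_zero_of_lt (by omega)] at this
          exact Nat.le_zero.mp this
      rw [hEpr, h1, Finset.sum_congr rfl h2, Finset.sum_powerset_apply_card g, hWcard]
      have h3 : ∀ m ∈ Finset.range (M + 1), M.choose m • g m = M.choose m * g m :=
        fun m _ => smul_eq_mul ..
      rw [Finset.sum_congr rfl h3]
      have h4 : ∑ m ∈ Finset.range (M + 1), M.choose m * g m
          = ∑ m ∈ Finset.range (d + 1), M.choose m * g m := by
        symm
        apply Finset.sum_subset
        · intro m hm
          rw [Finset.mem_range] at hm ⊢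
          omega
        · intro m hm1 hm2
          rw [Finset.mem_range] at hm1 hm2
          rw [hg]
          simp only [if_neg (by omega : ¬ m ≤ d)]
          ring
      rw [h4]
      refine Finset.sum_congr rfl (fun m hm => ?_)
      rw [Finset.mem_range] at hm
      rw [hg]
      simp only [if_pos (by omega : m ≤ d)]
    have hMdsum : M ^ d = ∑ m ∈ Finset.range (d + 1), M.choose m * nsurj d m := by
      rw [pow_eq_sum_choose_nsurj d M]
      symm
      apply Finset.sum_subset
      · intro m hm
        rw [Finset.mem_range] at hm ⊢
        omega
      · intro m hm1 hm2
        rw [Finset.mem_range] at hm1 hm2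
        rw [nsurj_eq_zero_of_lt (by omega)]
        ring
    set β : Fin c → ℕ → ℝ := fun i j => (α i j : ℝ) - (nsurj d j : ℝ) / c with hβ
    have hdev : ∀ i : Fin c, ((Epr.filter (fun x => χ x = i)).card : ℝ) - (M : ℝ) ^ d / c
        = ∑ m ∈ Finset.range (d + 1), (M.choose m : ℝ) * β i m := by
      intro i
      rw [hcnt i]
      have h2 : ((M : ℝ)) ^ d = ∑ m ∈ Finset.range (d + 1), (M.choose m : ℝ) * (nsurj d m : ℝ) := by
        exact_mod_cast congrArg (Nat.cast : ℕ → ℝ) (hMdsum)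
      push_cast
      rw [h2, Finset.sum_div, ← Finset.sum_sub_distrib]
      refine Finset.sum_congr rfl (fun m _ => ?_)
      rw [hβ]
      ring
    have hi0 : ∃ i : Fin c, 1 / 2 ≤ |β i k| := by
      by_contra hcon
      push_neg at hcon
      set i1 : Fin c := ⟨0, by omega⟩ with hi1
      have hall : ∀ i : Fin c, α i k = α i1 k := by
        intro i
        have h1 := hcon i
        have h2 := hcon i1
        have hd1 : β i k - β i1 k = (α i k : ℝ) - α i1 k := by
          rw [hβ]; ring
        have h3 : |(α i k : ℝ) - α i1 k| < 1 := by
          rw [← hd1]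
          have h4 := abs_add_le (β i k) (-(β i1 k))
          rw [abs_neg, ← sub_eq_add_neg] at h4
          linarith
        rw [abs_lt] at h3
        have h5 : (α i k : ℝ) < (α i1 k : ℝ) + 1 := by linarith
        have h6 : (α i1 k : ℝ) < (α i k : ℝ) + 1 := by linarith
        have h7 : α i k < α i1 k + 1 := by exact_mod_cast h5
        have h8 : α i1 k < α i k + 1 := by exact_mod_cast h6
        omega
      have hsum := hsum_col k hkd
      rw [Finset.sum_congr rfl (fun i _ => hall i), Finset.sum_const, Finset.card_univ,
        Fintype.card_fin, smul_eq_mul] at hsum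
      exact hdiv ⟨α i1 k, hsum.symm⟩
    obtain ⟨i₀, hi₀⟩ := hi0
    have hβk_ne : β i₀ k ≠ 0 := by
      intro h
      rw [h, abs_zero] at hi₀
      norm_num at hi₀
    set SJ := (Finset.Icc k d).filter (fun j => β i₀ j ≠ 0) with hSJ
    have hSne : SJ.Nonempty := ⟨k, by
      rw [hSJ, Finset.mem_filter, Finset.mem_Icc]
      exact ⟨⟨le_refl k, hkd⟩, hβk_ne⟩⟩
    set J := SJ.max' hSne with hJ
    have hJS : J ∈ SJ := SJ.max'_mem hSne
    have hkJd : k ≤ J ∧ J ≤ d := by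
      have := (Finset.mem_filter.mp hJS).1
      exact Finset.mem_Icc.mp this
    have hβJ_ne : β i₀ J ≠ 0 := (Finset.mem_filter.mp hJS).2
    have hhigh : ∀ m, J < m → m ≤ d → β i₀ m = 0 := by
      intro m h1 h2
      by_contra hne
      have hmS : m ∈ SJ := by
        rw [hSJ, Finset.mem_filter, Finset.mem_Icc]
        exact ⟨⟨le_trans hkJd.1 (le_of_lt h1), h2⟩, hne⟩
      have := SJ.le_max' m hmS
      omega
    have hβgrid : ∀ j, j ≤ d → β i₀ j ≠ 0 → 1 / (c : ℝ) ≤ |β i₀ j| := by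
      intro j hj hne
      set z : ℤ := c * α i₀ j - nsurj d j with hz
      have hc0 : (c : ℝ) ≠ 0 := by positivity
      have hβz : β i₀ j = (z : ℝ) / c := by
        rw [hβ, hz]
        push_cast
        field_simp
      have hzne : z ≠ 0 := by
        intro h
        rw [hβz, h] at hne
        simp at hne
      have hz1 : (1 : ℝ) ≤ |(z : ℝ)| := by
        rw [← Int.cast_abs]
        exact_mod_cast Int.one_le_abs hzne
      rw [hβz, abs_div, abs_of_pos (by positivity : (0:ℝ) < (c:ℝ))]
      apply div_le_div_of_nonneg_right hz1
      positivity
    have hβbound : ∀ (i : Fin c) j, j ≤ d → |β i j| ≤ (A : ℝ) := by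
      intro i j hj
      rw [hβ, abs_le]
      have h1 : (α i j : ℝ) ≤ (A : ℝ) := by
        exact_mod_cast le_trans (hαle i j hj) (hnsurj_le j hj)
      have h2 : (nsurj d j : ℝ) ≤ (A : ℝ) := by exact_mod_cast hnsurj_le j hj
      have h3 : (0:ℝ) ≤ (nsurj d j : ℝ) / c := by positivity
      have h4 : (nsurj d j : ℝ) / c ≤ (nsurj d j : ℝ) := by
        apply div_le_self (Nat.cast_nonneg _)
        exact_mod_cast (by omega : 1 ≤ c)
      have h5 : (0:ℝ) ≤ (α i j : ℝ) := Nat.cast_nonneg _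
      constructor <;> linarith
    have hchoosemono : ∀ a b : ℕ, a ≤ b → b ≤ d → M.choose a ≤ M.choose b := by
      intro a b hab hbd
      induction b, hab using Nat.le_induction with
      | base => exact le_refl _
      | succ b hb ih =>
        refine le_trans (ih (by omega)) (Nat.choose_le_succ_of_lt_half_left ?_)
        have : b + 1 ≤ M / 2 := by
          rw [Nat.le_div_iff_mul_le (by omega : 0 < 2)]
          omega
        omega
    have hJmem : J ∈ Finset.range (d + 1) := Finset.mem_range.mpr (by omega)
    have hsplit : (M.choose J : ℝ) * |β i₀ J| - (d : ℝ) * ((M.choose (J - 1) : ℝ) * A)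
        ≤ |∑ m ∈ Finset.range (d + 1), (M.choose m : ℝ) * β i₀ m| := by
      have hsum_split : ∑ m ∈ Finset.range (d + 1), (M.choose m : ℝ) * β i₀ m
          = (M.choose J : ℝ) * β i₀ J
            + ∑ m ∈ (Finset.range (d + 1)).erase J, (M.choose m : ℝ) * β i₀ m :=
        (Finset.add_sum_erase _ _ hJmem).symm
      have herase : |∑ m ∈ (Finset.range (d + 1)).erase J, (M.choose m : ℝ) * β i₀ m|
          ≤ (d : ℝ) * ((M.choose (J - 1) : ℝ) * A) := by
        refine le_trans (Finset.abs_sum_le_sum_abs _ _) ?_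
        have hcard : ((Finset.range (d + 1)).erase J).card = d := by
          rw [Finset.card_erase_of_mem hJmem, Finset.card_range]
          omega
        have hterm : ∀ m ∈ (Finset.range (d + 1)).erase J,
            |(M.choose m : ℝ) * β i₀ m| ≤ (M.choose (J - 1) : ℝ) * A := by
          intro m hm
          obtain ⟨hmne, hmr⟩ := Finset.mem_erase.mp hm
          rw [Finset.mem_range] at hmr
          rcases Nat.lt_or_ge m J with hmJ | hmJ
          · rw [abs_mul, Nat.abs_cast]
            apply mul_le_mul ?_ (hβbound i₀ m (by omega)) (abs_nonneg _) (Nat.cast_nonneg _)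
            exact_mod_cast hchoosemono m (J - 1) (by omega) (by omega)
          · have hJm : J < m := by omega
            rw [hhigh m hJm (by omega), mul_zero, abs_zero]
            positivity
        calc ∑ m ∈ (Finset.range (d + 1)).erase J, |(M.choose m : ℝ) * β i₀ m|
            ≤ ((Finset.range (d + 1)).erase J).card • ((M.choose (J - 1) : ℝ) * A) :=
              Finset.sum_le_card_nsmul _ _ _ hterm
          _ = (d : ℝ) * ((M.choose (J - 1) : ℝ) * A) := by rw [hcard, nsmul_eq_mul]
      rw [hsum_split]
      have habs2 : |(M.choose J : ℝ) * β i₀ J| = (M.choose J : ℝ) * |β i₀ J| := by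
        rw [abs_mul, Nat.abs_cast]
      have habs3 := abs_add_le ((M.choose J : ℝ) * β i₀ J
          + ∑ m ∈ (Finset.range (d + 1)).erase J, (M.choose m : ℝ) * β i₀ m)
        (-(∑ m ∈ (Finset.range (d + 1)).erase J, (M.choose m : ℝ) * β i₀ m))
      rw [abs_neg, add_neg_cancel_right] at habs3
      linarith
    have hjunk : (d : ℝ) * ((M.choose (J - 1) : ℝ) * A) ≤ (M.choose J : ℝ) / (8 * c) := by
      have hJ1 : J - 1 + 1 = J := by omega
      have hid : M.choose J * J = M.choose (J - 1) * (M - (J - 1)) := by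
        conv_lhs => rw [← hJ1]
        exact Nat.choose_succ_right_eq M (J - 1)
      have h1 : 8 * c * A * d * J ≤ 8 * c * A * d * d :=
        Nat.mul_le_mul_left _ (by omega)
      have h2 : 8 * c * A * d * J ≤ q2 := by rw [← hq2]; exact h1
      have hkey : 8 * c * A * d * J ≤ M - (J - 1) := by omega
      have hnat : (8 * c * (A * (d * M.choose (J - 1)))) * J ≤ M.choose J * J := by
        rw [hid]
        calc (8 * c * (A * (d * M.choose (J - 1)))) * J
            = (8 * c * A * d * J) * M.choose (J - 1) := by ring
          _ ≤ (M - (J - 1)) * M.choose (J - 1) := Nat.mul_le_mul_right _ hkey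
          _ = M.choose (J - 1) * (M - (J - 1)) := Nat.mul_comm _ _
      have hnat2 : 8 * c * (A * (d * M.choose (J - 1))) ≤ M.choose J :=
        Nat.le_of_mul_le_mul_right hnat (by omega)
      rw [le_div_iff₀ (by positivity : (0:ℝ) < 8 * c)]
      calc (d : ℝ) * ((M.choose (J - 1) : ℝ) * A) * (8 * c)
          = ((8 * c * (A * (d * M.choose (J - 1))) : ℕ) : ℝ) := by push_cast; ring
        _ ≤ (M.choose J : ℝ) := by exact_mod_cast hnat2
    have hfinal : (M : ℝ) ^ k / (3 * k.factorial)
        ≤ (M.choose J : ℝ) * |β i₀ J| - (M.choose J : ℝ) / (8 * c) := by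
      have hkf : (0:ℝ) < (k.factorial : ℝ) := by exact_mod_cast k.factorial_pos
      have hM0 : (0:ℝ) < (M : ℝ) := by exact_mod_cast hM1
      have hCJ0 : (0:ℝ) ≤ (M.choose J : ℝ) := Nat.cast_nonneg _
      have hMk0 : (0:ℝ) ≤ (M : ℝ)^k := by positivity
      by_cases hJk : J = k
      · -- case J = k : |β| ≥ 1/2
        have hbk : 1 / 2 ≤ |β i₀ J| := by rw [hJk]; exact hi₀
        have hMk5 : 5 * (k * k) ≤ M := by rw [hq1]; exact hMq1
        have hkkM : 5 * ((k:ℝ) * k) ≤ (M:ℝ) := by exact_mod_cast hMk5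
        have hkR : (k:ℝ) ≤ (M:ℝ) := by exact_mod_cast (by omega : k ≤ M)
        have hk0 : (0:ℝ) ≤ (k:ℝ) := Nat.cast_nonneg _
        have hkk0 : (0:ℝ) ≤ (k:ℝ)*k := by positivity
        set a : ℝ := (1 - (k:ℝ)) / M with ha
        have h1 : (-2:ℝ) ≤ a := by
          rw [ha, le_div_iff₀ hM0]
          linarith
        have hbern := one_add_mul_le_pow h1 k
        have hX : (k:ℝ) * a = ((k:ℝ) * (1 - (k:ℝ))) / M := by rw [ha]; ring
        have h2 : (16:ℝ)/21 ≤ 1 + (k:ℝ) * a := by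
          have h2' : (-(5:ℝ)/21) ≤ ((k:ℝ) * (1 - (k:ℝ))) / M := by
            rw [le_div_iff₀ hM0]
            nlinarith
          rw [hX]
          linarith
        have hka : 1 + a = ((M:ℝ) + 1 - k) / M := by
          rw [ha]; field_simp; ring
        have h1a : (0:ℝ) ≤ 1 + a := by
          rw [hka]
          apply div_nonneg (by linarith) (le_of_lt hM0)
        have h3 : ((M:ℝ) + 1 - k)^k = (1 + a)^k * (M:ℝ)^k := by
          rw [hka, div_pow]
          field_simp
        have hnatk : (M + 1 - k)^k ≤ k.factorial * M.choose k := by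
          calc (M + 1 - k)^k ≤ M.descFactorial k := Nat.pow_sub_le_descFactorial M k
            _ = k.factorial * M.choose k := Nat.descFactorial_eq_factorial_mul_choose M k
        have hcast : ((M + 1 - k : ℕ) : ℝ) = (M:ℝ) + 1 - k := by
          have hk1 : k ≤ M + 1 := by omega
          push_cast [hk1]
          ring
        have h4 : ((M:ℝ) + 1 - k)^k ≤ (k.factorial : ℝ) * (M.choose k : ℝ) := by
          rw [← hcast]
          exact_mod_cast hnatk
        have s1 : (16:ℝ)/21 * (M:ℝ)^k ≤ (1 + (k:ℝ)*a) * (M:ℝ)^k :=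
          mul_le_mul_of_nonneg_right h2 hMk0
        have s2 : (1 + (k:ℝ)*a) * (M:ℝ)^k ≤ (1 + a)^k * (M:ℝ)^k :=
          mul_le_mul_of_nonneg_right hbern hMk0
        have h5 : (16:ℝ) * (M:ℝ)^k ≤ 21 * ((k.factorial : ℝ) * (M.choose k : ℝ)) := by
          have := h3 ▸ h4
          linarith
        have hgoal1 : (M:ℝ)^k / (3 * k.factorial) ≤ (7:ℝ)/16 * (M.choose k : ℝ) := by
          rw [div_le_iff₀ (by positivity)]
          linarith
        have hCJk : (M.choose J : ℝ) = (M.choose k : ℝ) := by rw [hJk]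
        have h16c : (16:ℝ) ≤ 8 * c := by
          have : (2:ℝ) ≤ (c:ℝ) := by exact_mod_cast hc
          linarith
        have h8c16 : (M.choose J : ℝ)/(8*c) ≤ (M.choose J : ℝ)/16 :=
          div_le_div_of_nonneg_left hCJ0 (by norm_num) h16c
        have hlow : (M.choose J : ℝ) * (1/2) ≤ (M.choose J : ℝ) * |β i₀ J| :=
          mul_le_mul_of_nonneg_left hbk hCJ0
        rw [hCJk] at hlow h8c16 ⊢
        linarith
      · -- case J > k : |β| ≥ 1/c
        have hJk' : k + 1 ≤ J := by omega
        have hbk : 1/(c:ℝ) ≤ |β i₀ J| := hβgrid J hkJd.2 hβJ_ne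
        have hc0 : (0:ℝ) < (c:ℝ) := by positivity
        have hCmono : (M.choose (k+1) : ℝ) ≤ (M.choose J : ℝ) := by
          exact_mod_cast hchoosemono (k+1) J hJk' hkJd.2
        have hq3le : c * (k+1) * 2^k ≤ q3 := by
          rw [← hq3]
          calc c * (k+1) * 2^k ≤ c * (d+1) * 2^d :=
            Nat.mul_le_mul (Nat.mul_le_mul_left c (by omega)) (Nat.pow_le_pow_right (by omega) (by omega))
            _ = 2^d * c * (d+1) := by ring
        have hMk_q : c * (k+1) * 2^k + k ≤ M := by omega
        have hMkcast : (c:ℝ) * ((k:ℝ)+1) * (2:ℝ)^k ≤ (M:ℝ) - k := by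
          have hcc := (Nat.cast_le (α := ℝ)).mpr hMk_q
          push_cast at hcc
          linarith
        have hnatk : (M - k)^(k+1) ≤ (k+1).factorial * M.choose (k+1) := by
          have h := Nat.pow_sub_le_descFactorial M (k+1)
          rw [Nat.descFactorial_eq_factorial_mul_choose] at h
          have he : M + 1 - (k+1) = M - k := by omega
          rw [he] at h
          exact h
        have hcast2 : ((M - k : ℕ) : ℝ) = (M:ℝ) - k := by
          have hkM : k ≤ M := by omega
          push_cast [hkM]
          ring
        have h4 : ((M:ℝ) - k)^(k+1) ≤ ((k+1).factorial : ℝ) * (M.choose (k+1) : ℝ) := by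
          rw [← hcast2]
          exact_mod_cast hnatk
        have hhalf : (M:ℝ)/2 ≤ (M:ℝ) - k := by
          have h2k : (2:ℝ) * k ≤ (M:ℝ) := by exact_mod_cast hMk
          linarith
        have h6 : ((M:ℝ)/2)^k ≤ ((M:ℝ) - k)^k := pow_le_pow_left₀ (by positivity) hhalf k
        have h7 : 8 * (c:ℝ) * ((k:ℝ)+1) * (M:ℝ)^k ≤ 21 * ((M:ℝ) - k)^(k+1) := by
          have e1 : ((M:ℝ) - k)^(k+1) = ((M:ℝ) - k)^k * ((M:ℝ) - k) := pow_succ _ k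
          have e2 : ((M:ℝ)/2)^k = (M:ℝ)^k / 2^k := div_pow (M:ℝ) 2 k
          have s1 : ((M:ℝ)^k/2^k) * ((c:ℝ)*((k:ℝ)+1)*2^k) ≤ ((M:ℝ) - k)^k * ((M:ℝ) - k) := by
            have hMk00 : (0:ℝ) ≤ ((M:ℝ) - k)^k := pow_nonneg (by linarith) k
            apply mul_le_mul (e2 ▸ h6) hMkcast (by positivity) hMk00
          have s2 : ((M:ℝ)^k/2^k) * ((c:ℝ)*((k:ℝ)+1)*2^k) = (c:ℝ)*((k:ℝ)+1)*(M:ℝ)^k := by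
            field_simp
          have s3 : (0:ℝ) ≤ (c:ℝ)*((k:ℝ)+1)*(M:ℝ)^k := by positivity
          rw [e1]
          nlinarith [s1, s2, s3]
        have hfact : ((k+1).factorial : ℝ) = ((k:ℝ)+1) * (k.factorial : ℝ) := by
          rw [Nat.factorial_succ]
          push_cast
          ring
        have h8 : 8*(c:ℝ)*((k:ℝ)+1)*(M:ℝ)^k
            ≤ 21*(((k:ℝ)+1)*((k.factorial:ℝ)*(M.choose (k+1):ℝ))) := by
          calc 8*(c:ℝ)*((k:ℝ)+1)*(M:ℝ)^k ≤ 21*(((M:ℝ) - k)^(k+1)) := h7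
            _ ≤ 21*(((k+1).factorial : ℝ) * (M.choose (k+1):ℝ)) := by linarith
            _ = _ := by rw [hfact]; ring
        have hk10 : (0:ℝ) < (k:ℝ)+1 := by positivity
        have h9 : 8*(c:ℝ)*(M:ℝ)^k ≤ 21*((k.factorial:ℝ)*(M.choose (k+1):ℝ)) := by
          have hr := h8
          nlinarith [hr, hk10]
        have hgoal1 : (M:ℝ)^k/(3*k.factorial) ≤ 7/(8*(c:ℝ)) * (M.choose (k+1) : ℝ) := by
          rw [div_le_iff₀ (by positivity)]
          have heq : (7:ℝ)/(8*c) * (M.choose (k+1):ℝ) * (3*(k.factorial:ℝ))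
              = (21*((k.factorial:ℝ)*(M.choose (k+1):ℝ)))/(8*c) := by
            field_simp
            ring
          rw [heq, le_div_iff₀ (by positivity : (0:ℝ) < 8*c)]
          linarith
        calc (M:ℝ)^k/(3*k.factorial) ≤ 7/(8*(c:ℝ)) * (M.choose (k+1):ℝ) := hgoal1
          _ ≤ 7/(8*(c:ℝ)) * (M.choose J:ℝ) := by
              apply mul_le_mul_of_nonneg_left hCmono (by positivity)
          _ ≤ (M.choose J:ℝ) * |β i₀ J| - (M.choose J:ℝ)/(8*c) := by
              have s1 : (M.choose J:ℝ) * (1/(c:ℝ)) ≤ (M.choose J:ℝ) * |β i₀ J| :=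
                mul_le_mul_of_nonneg_left hbk hCJ0
              have heq2 : 7/(8*(c:ℝ)) * (M.choose J:ℝ)
                  = (M.choose J:ℝ)*(1/(c:ℝ)) - (M.choose J:ℝ)/(8*c) := by
                field_simp
                ring
              linarith
    have hdva : dva c χ Epr i₀
        = |∑ m ∈ Finset.range (d + 1), (M.choose m : ℝ) * β i₀ m| := by
      rw [dva, ← hdev i₀, hEprcard]
      push_cast
      rfl
    calc (M : ℝ) ^ k / (3 * k.factorial)
        ≤ (M.choose J : ℝ) * |β i₀ J| - (M.choose J : ℝ) / (8 * c) := hfinal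
      _ ≤ (M.choose J : ℝ) * |β i₀ J| - (d : ℝ) * ((M.choose (J - 1) : ℝ) * A) := by
          linarith
      _ ≤ |∑ m ∈ Finset.range (d + 1), (M.choose m : ℝ) * β i₀ m| := hsplit
      _ = dva c χ Epr i₀ := hdva.symm
      _ ≤ discCol (symProd K d) c χ := le_discCol _ c χ hSPcard hEprK i₀
  refine ⟨n, K, hdisc_lb, ?_⟩
  calc (1 / (3 * (k.factorial : ℝ))) * disc K c ^ k
      ≤ (1 / (3 * (k.factorial : ℝ))) * (M : ℝ) ^ k := by
        apply mul_le_mul_of_nonneg_left (pow_le_pow_left₀ hdisc_nonneg hdisc_ub k)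
        positivity
    _ = (M : ℝ) ^ k / (3 * k.factorial) := by ring
    _ ≤ disc (symProd K d) c := hsym
end

section
/- Let d ≥ 3 be an odd natural number. Then every hypergraph H satisfies disc(Δ^d H, 3) ≤ disc(H, 3). -/
set_option linter.unusedSectionVars false

section ListStuff

variable {V : Type} [DecidableEq V]

def listConst (l : List V) : Prop := ∀ a ∈ l, ∀ b ∈ l, a = b

instance (l : List V) : Decidable (listConst l) :=
  decidable_of_iff (∀ a ∈ l, ∀ b ∈ l, a = b) Iff.rfl

lemma listConst_cons {a : V} {t : List V} : listConst (a :: t) ↔ ∀ x ∈ t, x = a := by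
  constructor
  · intro h x hx
    exact h x (List.mem_cons_of_mem _ hx) a (List.mem_cons_self)
  · intro h
    have e : ∀ z, z ∈ a :: t → z = a := by
      intro z hz
      rcases List.mem_cons.1 hz with h1 | h1
      · exact h1
      · exact h z h1
    intro x hx y hy
    rw [e x hx, e y hy]

def TL : List V → List V
  | u :: v :: w :: rest =>
    if ∀ a ∈ rest, a = w then v :: w :: List.replicate (rest.length + 1) u
    else u :: v :: TL (w :: rest)
  | l => l

lemma TL_eq_self (l : List V) (h : ∀ (u v w : V) (rest : List V), l = u :: v :: w :: rest → False) :
    TL l = l := by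
  rw [TL.eq_def]
  split
  · exact absurd rfl (h _ _ _ _)
  · rfl

lemma TL_length (l : List V) : (TL l).length = l.length := by
  induction l using TL.induct with
  | case1 u v w rest h =>
    rw [TL, if_pos h]; simp
  | case2 u v w rest h ih =>
    rw [TL, if_neg h]; simpa using ih
  | case3 l h =>
    rw [TL_eq_self l h]

lemma mem_TL (l : List V) (a : V) : a ∈ TL l ↔ a ∈ l := by
  induction l using TL.induct with
  | case1 u v w rest h =>
    rw [TL, if_pos h]
    simp only [List.mem_cons, List.mem_replicate]
    constructor
    · rintro (rfl | rfl | ⟨-, rfl⟩) <;> tauto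
    · rintro (rfl | rfl | rfl | hm)
      · exact Or.inr (Or.inr ⟨Nat.succ_ne_zero _, rfl⟩)
      · exact Or.inl rfl
      · exact Or.inr (Or.inl rfl)
      · exact Or.inr (Or.inl (h a hm))
  | case2 u v w rest h ih =>
    rw [TL, if_neg h]
    simp only [List.mem_cons] at ih ⊢
    tauto
  | case3 l h =>
    rw [TL_eq_self l h]

lemma notconst_TL (l : List V) (h : ¬ listConst l) : ¬ listConst (TL l) := by
  intro hc
  exact h fun a ha b hb => hc a ((mem_TL l a).2 ha) b ((mem_TL l b).2 hb)

lemma TL_cons_of_notconst (u v a : V) (t : List V) (h : ¬ ∀ x ∈ t, x = a) :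
    TL (u :: v :: a :: t) = u :: v :: TL (a :: t) := by
  rw [TL, if_neg h]

lemma listConst_of_short (l : List V) (h : l.length ≤ 1) : listConst l := by
  match l, h with
  | [], _ =>
    intro a ha; exact absurd ha List.not_mem_nil
  | [x], _ =>
    intro a ha b hb
    rw [List.mem_singleton] at ha hb; rw [ha, hb]

lemma exists_cons_notconst (m : List V) (hm : ¬ listConst m) :
    ∃ a t, m = a :: t ∧ ¬ ∀ x ∈ t, x = a := by
  match m with
  | [] => exact absurd (listConst_of_short [] (by simp)) hm
  | a :: t =>
    refine ⟨a, t, rfl, ?_⟩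
    intro h
    exact hm (listConst_cons.2 h)

lemma TL_three (l : List V) : TL (TL (TL l)) = l := by
  induction l using TL.induct with
  | case1 u v w rest h =>
    rw [TL, if_pos h, List.replicate_succ]
    rw [TL, if_pos (fun a ha => List.eq_of_mem_replicate ha), List.length_replicate,
      List.replicate_succ]
    rw [TL, if_pos (fun a ha => List.eq_of_mem_replicate ha), List.length_replicate,
      List.replicate_succ]
    have : rest = List.replicate rest.length w := List.eq_replicate_of_mem h
    rw [← this]
  | case2 u v w rest h ih =>
    have hnc : ¬ listConst (w :: rest) := fun hc => h (listConst_cons.1 hc)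
    rw [TL_cons_of_notconst u v w rest h]
    obtain ⟨a, t, h1, h2⟩ := exists_cons_notconst _ (notconst_TL _ hnc)
    rw [h1, TL_cons_of_notconst u v a t h2, ← h1]
    obtain ⟨a2, t2, h3, h4⟩ := exists_cons_notconst _ (notconst_TL _ (notconst_TL _ hnc))
    rw [h3, TL_cons_of_notconst u v a2 t2 h4, ← h3, ih]
  | case3 l h =>
    rw [TL_eq_self l h, TL_eq_self l h, TL_eq_self l h]

end ListStuff

section Psi

variable {V : Type} [DecidableEq V] [Fintype V]

noncomputable def enc3 (u v w : V) : ℕ := (Fintype.equivFin (V × V × V)) (u, v, w)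

lemma enc3_inj {u v w u' v' w' : V} (h : enc3 u v w = enc3 u' v' w') :
    u = u' ∧ v = v' ∧ w = w' := by
  have h2 : ((u, v, w) : V × V × V) = (u', v', w') := by
    apply (Fintype.equivFin (V × V × V)).injective
    exact Fin.val_injective h
  simpa [Prod.ext_iff] using h2

noncomputable def psi3 (u v w : V) : Fin 3 :=
  if enc3 u v w ≤ enc3 v w u ∧ enc3 u v w ≤ enc3 w u v then 0
  else if enc3 v w u ≤ enc3 w u v then 2 else 1

lemma psi3_rot (u v w : V) (h : ¬ (u = v ∧ v = w)) : psi3 v w u = psi3 u v w + 1 := by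
  have e1 : enc3 u v w ≠ enc3 v w u := by
    intro he
    obtain ⟨h1, h2, h3⟩ := enc3_inj he
    exact h ⟨h1, h2⟩
  have e2 : enc3 u v w ≠ enc3 w u v := by
    intro he
    obtain ⟨h1, h2, h3⟩ := enc3_inj he
    exact h ⟨h2.symm, h3.symm⟩
  have e3 : enc3 v w u ≠ enc3 w u v := by
    intro he
    obtain ⟨h1, h2, h3⟩ := enc3_inj he
    exact h ⟨h3, h1⟩
  unfold psi3
  split_ifs <;> first | decide | (exfalso; omega)

noncomputable def psiL : List V → Fin 3
  | u :: v :: w :: rest => if ∀ a ∈ rest, a = w then psi3 u v w else psiL (w :: rest)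
  | _ => 0

lemma psiL_cons_of_notconst (u v a : V) (t : List V) (h : ¬ ∀ x ∈ t, x = a) :
    psiL (u :: v :: a :: t) = psiL (a :: t) := by
  rw [psiL, if_neg h]

lemma psiL_TL (l : List V) (hodd : Odd l.length) (hnc : ¬ listConst l) :
    psiL (TL l) = psiL l + 1 := by
  induction l using TL.induct with
  | case1 u v w rest h =>
    rw [TL, if_pos h, List.replicate_succ]
    rw [psiL, if_pos (fun a ha => List.eq_of_mem_replicate ha)]
    rw [psiL, if_pos h]
    apply psi3_rot
    rintro ⟨h1, h2⟩
    apply hnc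
    intro a ha b hb
    simp only [List.mem_cons] at ha hb
    have key : ∀ z, z = u ∨ z = v ∨ z = w ∨ z ∈ rest → z = w := by
      rintro z (rfl | rfl | rfl | hz)
      · rw [h1, h2]
      · exact h2
      · rfl
      · exact h z hz
    rw [key a ha, key b hb]
  | case2 u v w rest h ih =>
    have hnc2 : ¬ listConst (w :: rest) := fun hc => h (listConst_cons.1 hc)
    have hodd2 : Odd (w :: rest).length := by
      simp only [List.length_cons] at hodd ⊢
      rw [Nat.odd_iff] at hodd ⊢
      omega
    rw [TL_cons_of_notconst u v w rest h]
    obtain ⟨a, t, h1, h2⟩ := exists_cons_notconst _ (notconst_TL _ hnc2)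
    rw [h1, psiL_cons_of_notconst u v a t h2, ← h1]
    rw [psiL_cons_of_notconst u v w rest h]
    exact ih hodd2 hnc2
  | case3 l h =>
    exfalso
    have hlen : l.length ≤ 2 := by
      by_contra hlen
      push_neg at hlen
      match l, hlen with
      | u :: v :: w :: rest, _ => exact h u v w rest rfl
    have h2 : 2 ≤ l.length := by
      by_contra h2
      push_neg at h2
      exact hnc (listConst_of_short l (by omega))
    rw [Nat.odd_iff] at hodd
    omega

noncomputable def colorL (χ : V → Fin 3) : List V → Fin 3
  | [] => 0
  | a :: t => if listConst (a :: t) then χ a else psiL (a :: t)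

lemma colorL_of_const (χ : V → Fin 3) (l : List V) (hc : listConst l) {a : V} (ha : a ∈ l) :
    colorL χ l = χ a := by
  match l with
  | [] => exact absurd ha List.not_mem_nil
  | b :: t =>
    rw [colorL, if_pos hc]
    rw [hc b (List.mem_cons_self) a ha]

lemma colorL_of_notconst (χ : V → Fin 3) (l : List V) (hc : ¬ listConst l) :
    colorL χ l = psiL l := by
  match l with
  | [] => exact absurd (listConst_of_short [] (by simp)) hc
  | b :: t => rw [colorL, if_neg hc]

end Psi

section TFsec

variable {V : Type} [DecidableEq V]

def TF {d : ℕ} (x : Fin d → V) : Fin d → V := fun j =>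
  (TL (List.ofFn x))[(j : ℕ)]'(by rw [TL_length, List.length_ofFn]; exact j.isLt)

lemma ofFn_TF {d : ℕ} (x : Fin d → V) : List.ofFn (TF x) = TL (List.ofFn x) := by
  apply List.ext_getElem
  · simp [TL_length]
  · intro n h1 h2
    simp [TF]

lemma TF_three {d : ℕ} (x : Fin d → V) : TF (TF (TF x)) = x := by
  apply List.ofFn_injective
  rw [ofFn_TF, ofFn_TF, ofFn_TF, TL_three]

end TFsec

section Key

variable {V : Type} [Fintype V] [DecidableEq V]

lemma fin3_cycle : ∀ j : Fin 3, j + 1 + 1 + 1 = j := by decide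

lemma mem_ofFn' {d : ℕ} (x : Fin d → V) (k : Fin d) : x k ∈ List.ofFn x :=
  List.mem_ofFn.2 ⟨k, rfl⟩

lemma exists_of_mem_ofFn {d : ℕ} {x : Fin d → V} {a : V} (h : a ∈ List.ofFn x) :
    ∃ k, x k = a :=
  List.mem_ofFn.1 h

lemma key (d : ℕ) (hd : 3 ≤ d) (hodd : Odd d) (χ : V → Fin 3) (E : Finset V) (i : Fin 3) :
    |(((Fintype.piFinset fun _ : Fin d => E).filter
        fun x => colorL χ (List.ofFn x) = i).card : ℝ)
        - ((Fintype.piFinset fun _ : Fin d => E).card : ℝ) / 3|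
      = |((E.filter fun v => χ v = i).card : ℝ) - (E.card : ℝ) / 3| := by
  have hd0 : 0 < d := by omega
  set F := Fintype.piFinset fun _ : Fin d => E with hFdef
  have hoddL : ∀ x : Fin d → V, Odd (List.ofFn x).length := by
    intro x; rw [List.length_ofFn]; exact hodd
  -- split into constant and nonconstant parts
  have hsplit : ∀ j : Fin 3, (F.filter fun x => colorL χ (List.ofFn x) = j).card
      = (F.filter fun x => (colorL χ (List.ofFn x) = j) ∧ listConst (List.ofFn x)).card
        + (F.filter fun x => (colorL χ (List.ofFn x) = j) ∧ ¬ listConst (List.ofFn x)).card := by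
    intro j
    rw [← Finset.filter_filter, ← Finset.filter_filter,
      Finset.card_filter_add_card_filter_not]
  -- the constant part
  have hK : ∀ j : Fin 3,
      (F.filter fun x => (colorL χ (List.ofFn x) = j) ∧ listConst (List.ofFn x)).card
      = (E.filter fun v => χ v = j).card := by
    intro j
    refine Finset.card_nbij' (fun x => x ⟨0, hd0⟩) (fun v => fun _ => v) ?_ ?_ ?_ ?_
    · intro x hx
      rw [Finset.mem_coe, Finset.mem_filter] at hx
      rw [Finset.mem_coe, Finset.mem_filter]
      refine ⟨Fintype.mem_piFinset.1 hx.1 _, ?_⟩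
      rw [← colorL_of_const χ _ hx.2.2 (mem_ofFn' x ⟨0, hd0⟩)]
      exact hx.2.1
    · intro v hv
      rw [Finset.mem_coe, Finset.mem_filter] at hv
      have hcst : listConst (List.ofFn fun _ : Fin d => v) := by
        intro a ha b hb
        obtain ⟨k, rfl⟩ := exists_of_mem_ofFn ha
        obtain ⟨m, rfl⟩ := exists_of_mem_ofFn hb
        rfl
      rw [Finset.mem_coe, Finset.mem_filter]
      refine ⟨Fintype.mem_piFinset.2 fun _ => hv.1, ?_, hcst⟩
      rw [colorL_of_const χ _ hcst (mem_ofFn' (fun _ : Fin d => v) ⟨0, hd0⟩)]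
      exact hv.2
    · intro x hx
      rw [Finset.mem_coe, Finset.mem_filter] at hx
      funext k
      exact hx.2.2 (x ⟨0, hd0⟩) (mem_ofFn' x ⟨0, hd0⟩) (x k) (mem_ofFn' x k)
    · intro v _
      rfl
  -- identify color with psiL on nonconstant part
  have hA' : ∀ j : Fin 3,
      (F.filter fun x => (colorL χ (List.ofFn x) = j) ∧ ¬ listConst (List.ofFn x)).card
      = (F.filter fun x => (psiL (List.ofFn x) = j) ∧ ¬ listConst (List.ofFn x)).card := by
    intro j
    congr 1
    apply Finset.filter_congr
    intro x _
    constructor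
    · rintro ⟨h1, h2⟩
      rw [colorL_of_notconst χ _ h2] at h1
      exact ⟨h1, h2⟩
    · rintro ⟨h1, h2⟩
      rw [colorL_of_notconst χ _ h2]
      exact ⟨h1, h2⟩
  -- TF preserves F
  have hTFmem : ∀ x ∈ F, TF x ∈ F := by
    intro x hx
    rw [Fintype.mem_piFinset] at hx ⊢
    intro k
    have h1 : TF x k ∈ TL (List.ofFn x) := List.getElem_mem _
    rw [mem_TL] at h1
    obtain ⟨m, hm⟩ := exists_of_mem_ofFn h1
    rw [← hm]
    exact hx m
  -- the nonconstant classes all have the same size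
  have hrot : ∀ j : Fin 3,
      (F.filter fun x => (psiL (List.ofFn x) = j) ∧ ¬ listConst (List.ofFn x)).card
      = (F.filter fun x => (psiL (List.ofFn x) = j + 1) ∧ ¬ listConst (List.ofFn x)).card := by
    intro j
    refine Finset.card_nbij' (fun x => TF x) (fun y => TF (TF y)) ?_ ?_ ?_ ?_
    · intro x hx
      rw [Finset.mem_coe, Finset.mem_filter] at hx ⊢
      refine ⟨hTFmem x hx.1, ?_, ?_⟩
      · rw [ofFn_TF, psiL_TL _ (hoddL x) hx.2.2, hx.2.1]
      · rw [ofFn_TF]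
        exact notconst_TL _ hx.2.2
    · intro y hy
      rw [Finset.mem_coe, Finset.mem_filter] at hy ⊢
      have hnc2 : ¬ listConst (List.ofFn (TF y)) := by
        rw [ofFn_TF]; exact notconst_TL _ hy.2.2
      refine ⟨hTFmem _ (hTFmem y hy.1), ?_, ?_⟩
      · rw [ofFn_TF, psiL_TL _ (hoddL (TF y)) hnc2, ofFn_TF,
          psiL_TL _ (hoddL y) hy.2.2, hy.2.1]
        exact fin3_cycle j
      · rw [ofFn_TF]
        exact notconst_TL _ hnc2
    · intro x _
      exact TF_three x
    · intro y _
      exact TF_three y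
  have h01 := hrot 0
  have h12 := hrot 1
  have h20 := hrot 2
  rw [show (0 : Fin 3) + 1 = 1 from rfl] at h01
  rw [show (1 : Fin 3) + 1 = 2 from rfl] at h12
  rw [show (2 : Fin 3) + 1 = 0 from rfl] at h20
  have hAeq : ∀ j : Fin 3,
      (F.filter fun x => (psiL (List.ofFn x) = j) ∧ ¬ listConst (List.ofFn x)).card
      = (F.filter fun x => (psiL (List.ofFn x) = i) ∧ ¬ listConst (List.ofFn x)).card := by
    intro j
    fin_cases j <;> fin_cases i <;>
      first
        | rfl
        | exact h01
        | exact h12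
        | exact h20
        | exact h01.trans h12
        | exact h01.symm
        | exact h12.symm
        | exact (h01.trans h12).symm
  -- fiberwise counting
  have hfib : F.card = ∑ j : Fin 3, (F.filter fun x => colorL χ (List.ofFn x) = j).card :=
    Finset.card_eq_sum_card_fiberwise (fun x _ => Finset.mem_univ _)
  have hfibE : E.card = ∑ j : Fin 3, (E.filter fun v => χ v = j).card :=
    Finset.card_eq_sum_card_fiberwise (fun x _ => Finset.mem_univ _)
  have h3 : F.card = E.card
      + 3 * (F.filter fun x => (psiL (List.ofFn x) = i) ∧ ¬ listConst (List.ofFn x)).card := by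
    rw [hfib, hfibE, Fin.sum_univ_three, Fin.sum_univ_three,
      hsplit 0, hsplit 1, hsplit 2, hK 0, hK 1, hK 2, hA' 0, hA' 1, hA' 2,
      hAeq 0, hAeq 1, hAeq 2]
    ring
  rw [hsplit i, hK i, hA' i, h3]
  push_cast
  congr 1
  ring

end Key

section Glue

lemma discCol_nonneg_s2 {W : Type} (S : Finset (Finset W)) (c : ℕ) (ψ : W → Fin c) :
    0 ≤ discCol S c ψ := by
  apply Real.iSup_nonneg
  intro E
  apply Real.iSup_nonneg
  intro _
  apply Real.iSup_nonneg
  intro i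
  exact abs_nonneg _

lemma le_discCol_s2 {W : Type} [Finite W] {S : Finset (Finset W)} {E : Finset W} (hE : E ∈ S)
    (c : ℕ) (ψ : W → Fin c) (i : Fin c) :
    |((E.filter fun v => ψ v = i).card : ℝ) - (E.card : ℝ) / (c : ℝ)| ≤ discCol S c ψ := by
  haveI := Fintype.ofFinite W
  have h1 : |((E.filter fun v => ψ v = i).card : ℝ) - (E.card : ℝ) / (c : ℝ)|
      ≤ ⨆ k : Fin c, |((E.filter fun v => ψ v = k).card : ℝ) - (E.card : ℝ) / (c : ℝ)| :=
    le_ciSup (f := fun k : Fin c =>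
      |((E.filter fun v => ψ v = k).card : ℝ) - (E.card : ℝ) / (c : ℝ)|)
      (Set.Finite.bddAbove (Set.finite_range _)) i
  refine h1.trans ?_
  haveI : Nonempty (E ∈ S) := ⟨hE⟩
  have h2 : (⨆ k : Fin c, |((E.filter fun v => ψ v = k).card : ℝ) - (E.card : ℝ) / (c : ℝ)|)
      = ⨆ _ : E ∈ S, ⨆ k : Fin c,
          |((E.filter fun v => ψ v = k).card : ℝ) - (E.card : ℝ) / (c : ℝ)| :=
    (ciSup_const).symm
  rw [h2]
  exact le_ciSup (f := fun E' : Finset W => ⨆ _ : E' ∈ S, ⨆ k : Fin c,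
      |((E'.filter fun v => ψ v = k).card : ℝ) - (E'.card : ℝ) / (c : ℝ)|)
    (Set.Finite.bddAbove (Set.finite_range _)) E

lemma discCol_le_s2 {W : Type} [Finite W] {S : Finset (Finset W)} {c : ℕ} [Nonempty (Fin c)]
    {ψ : W → Fin c} {B : ℝ} (hB : 0 ≤ B)
    (h : ∀ E ∈ S, ∀ i : Fin c,
      |((E.filter fun v => ψ v = i).card : ℝ) - (E.card : ℝ) / (c : ℝ)| ≤ B) :
    discCol S c ψ ≤ B := by
  apply ciSup_le
  intro E
  by_cases hE : E ∈ S
  · haveI : Nonempty (E ∈ S) := ⟨hE⟩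
    rw [ciSup_const]
    apply ciSup_le
    intro i
    exact h E hE i
  · haveI : IsEmpty (E ∈ S) := ⟨fun h' => hE h'⟩
    rw [Real.iSup_of_isEmpty]
    exact hB

end Glue


/-- For odd `d ≥ 3`, every hypergraph satisfies `disc(Δ^d H, 3) ≤ disc(H, 3)`. -/
theorem stmt2 (d : ℕ) (hd : 3 ≤ d) (hodd : Odd d)
    (V : Type) [Fintype V] [DecidableEq V] (H : Finset (Finset V)) :
    disc (symProd H d) 3 ≤ disc H 3 := by
  apply le_ciInf
  intro χ
  set ψ : (Fin d → V) → Fin 3 := fun x => colorL χ (List.ofFn x) with hψ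
  have step1 : disc (symProd H d) 3 ≤ discCol (symProd H d) 3 ψ := by
    apply ciInf_le
    refine ⟨0, ?_⟩
    rintro _ ⟨φ, rfl⟩
    exact discCol_nonneg_s2 _ _ _
  refine step1.trans ?_
  apply discCol_le_s2 (discCol_nonneg_s2 _ _ _)
  intro F hF i
  obtain ⟨E, hE, rfl⟩ := Finset.mem_image.1 hF
  have hcast : ((3 : ℕ) : ℝ) = (3 : ℝ) := by norm_num
  rw [hcast]
  rw [key d hd hodd χ E i]
  have := le_discCol_s2 hE 3 χ i
  rw [hcast] at this
  exact this
end

section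
/- Let c, d ∈ ℕ with c ≥ 2 and d ≥ 1. For every m ∈ ℕ there exists n ∈ ℕ with the following property: for every c-coloring χ : [n]^d → [c] there is a subset T ⊆ [n] with |T| = m such that for every l ∈ [d], every l-dimensional simplex in T^d is monochromatic with respect to χ. -/
/-- `J` is a partition of `[d]` (realized as `Fin d`) into `l` nonempty subsets,
i.e. `J ∈ P_l(d)`. -/
def IsPartitionInto (d l : ℕ) (J : Finset (Finset (Fin d))) : Prop :=
  J.card = l ∧ (∀ A ∈ J, A.Nonempty) ∧ ∀ j : Fin d, ∃! A, A ∈ J ∧ j ∈ A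

/-- The (0-based) rank of a part `A` of `J` when the parts of `J` are ordered
by their minimal elements. -/
def partRank {d : ℕ} (J : Finset (Finset (Fin d))) (A : Finset (Fin d)) : ℕ :=
  (J.filter fun B => B.min < A.min).card

/-- The `l`-dimensional simplex `S^σ_J(T) ⊆ T^d`: all points `Σ_i α_(σ(i)) f_i(J)`
with `α : Fin l → T` strictly increasing; equivalently, the point whose `j`-th
coordinate is `α (σ i)` whenever `j` lies in the part of `J` of rank `i`. -/
def simplexSet (d l : ℕ) (J : Finset (Finset (Fin d))) (σ : Equiv.Perm (Fin l))
    (T : Finset ℕ) : Set (Fin d → ℕ) :=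
  { x | ∃ α : Fin l → ℕ, StrictMono α ∧ (∀ i, α i ∈ T) ∧
      ∀ (j : Fin d), ∀ A ∈ J, j ∈ A → ∀ i : Fin l, partRank J A = (i : ℕ) → x j = α (σ i) }

/-! ### Auxiliary definitions -/

/-- The set of the `k` smallest elements of `D` (if `D` has at least `k` elements). -/
def lowset (k : ℕ) (D : Finset ℕ) : Finset ℕ :=
  D.filter fun a => (D.filter (· ≤ a)).card ≤ k

/-- The part of `J` containing `j` (when `J` is a genuine partition). -/
def partOf {d : ℕ} (J : Finset (Finset (Fin d))) (j : Fin d) : Finset (Fin d) :=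
  (J.filter fun A => j ∈ A).sup id

/-- The point of the simplex determined by the increasing tuple `β`. -/
def pointOf {d : ℕ} (l : ℕ) (J : Finset (Finset (Fin d))) (σ : Equiv.Perm (Fin l))
    (β : Fin l → ℕ) : Fin d → ℕ :=
  fun j => if h : partRank J (partOf J j) < l then β (σ ⟨_, h⟩) else 0

lemma lowset_union {k : ℕ} {S U : Finset ℕ} (hS : S.card = k)
    (hlt : ∀ s ∈ S, ∀ u ∈ U, s < u) : lowset k (S ∪ U) = S := by
  ext a
  simp only [lowset, Finset.mem_filter, Finset.mem_union]
  constructor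
  · rintro ⟨ha | ha, hcard⟩
    · exact ha
    · exfalso
      have haS : a ∉ S := fun h => lt_irrefl a (hlt a h a ha)
      have hsub : insert a S ⊆ (S ∪ U).filter (· ≤ a) := by
        intro x hx
        rcases Finset.mem_insert.mp hx with rfl | hxS
        · exact Finset.mem_filter.mpr ⟨Finset.mem_union_right _ ha, le_refl _⟩
        · exact Finset.mem_filter.mpr ⟨Finset.mem_union_left _ hxS, (hlt x hxS a ha).le⟩
      have := Finset.card_le_card hsub
      rw [Finset.card_insert_of_notMem haS, hS] at this
      omega
  · intro ha
    refine ⟨Or.inl ha, ?_⟩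
    have hsub : (S ∪ U).filter (· ≤ a) ⊆ S := by
      intro x hx
      obtain ⟨hx1, hx2⟩ := Finset.mem_filter.mp hx
      rcases Finset.mem_union.mp hx1 with h | h
      · exact h
      · exact absurd hx2 (not_le.mpr (hlt a ha x h))
    calc ((S ∪ U).filter (· ≤ a)).card ≤ S.card := Finset.card_le_card hsub
      _ = k := hS

lemma partRank_lt {d l : ℕ} {J : Finset (Finset (Fin d))} (hJ : IsPartitionInto d l J)
    {A : Finset (Fin d)} (hA : A ∈ J) : partRank J A < l := by
  have hsub : J.filter (fun B => B.min < A.min) ⊆ J.erase A := by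
    intro B hB
    rw [Finset.mem_filter] at hB
    refine Finset.mem_erase.mpr ⟨fun h => ?_, hB.1⟩
    subst h; exact lt_irrefl _ hB.2
  have h1 := Finset.card_le_card hsub
  rw [Finset.card_erase_of_mem hA, hJ.1] at h1
  have h2 : 0 < J.card := Finset.card_pos.mpr ⟨A, hA⟩
  rw [hJ.1] at h2
  unfold partRank
  omega

lemma exists_pointOf {d l : ℕ} {J : Finset (Finset (Fin d))} (hJ : IsPartitionInto d l J)
    (σ : Equiv.Perm (Fin l)) {T : Finset ℕ} {x : Fin d → ℕ} (hx : x ∈ simplexSet d l J σ T) :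
    ∃ α : Fin l → ℕ, StrictMono α ∧ (∀ i, α i ∈ T) ∧ x = pointOf l J σ α := by
  obtain ⟨α, hmono, hT, hprop⟩ := hx
  refine ⟨α, hmono, hT, funext fun j => ?_⟩
  obtain ⟨A, ⟨hAJ, hjA⟩, huniq⟩ := hJ.2.2 j
  have hpart : partOf J j = A := by
    unfold partOf
    have hfil : J.filter (fun B => j ∈ B) = {A} := by
      ext B
      simp only [Finset.mem_filter, Finset.mem_singleton]
      constructor
      · rintro ⟨h1, h2⟩; exact huniq B ⟨h1, h2⟩
      · rintro rfl; exact ⟨hAJ, hjA⟩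
    rw [hfil, Finset.sup_singleton]; rfl
  have hlt : partRank J A < l := partRank_lt hJ hAJ
  unfold pointOf
  rw [hpart, dif_pos hlt]
  exact hprop j A hAJ hjA ⟨partRank J A, hlt⟩ rfl

/-! ### Finite Ramsey theorem for hypergraphs -/

section Ramsey

variable {κ : Type} [Fintype κ]

/-- `T` is homogeneous for the coloring `χ` of `r`-sets. -/
def Homog (r : ℕ) (χ : Finset ℕ → κ) (T : Finset ℕ) : Prop :=
  ∀ S₁, S₁ ⊆ T → S₁.card = r → ∀ S₂, S₂ ⊆ T → S₂.card = r → χ S₁ = χ S₂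

/-- `T` is min-homogeneous for the coloring `χ` of `(r+1)`-sets: the color of a set
depends only on its minimum. -/
def MinHom (r : ℕ) (χ : Finset ℕ → κ) (T : Finset ℕ) : Prop :=
  ∀ a S₁ S₂, S₁ ⊆ T → S₂ ⊆ T → S₁.card = r + 1 → S₂.card = r + 1 →
    a ∈ S₁ → a ∈ S₂ → (∀ b ∈ S₁, a ≤ b) → (∀ b ∈ S₂, a ≤ b) → χ S₁ = χ S₂

lemma take_drop_lt (T : Finset ℕ) (k : ℕ) :
    ∀ a ∈ (T.sort (· ≤ ·)).take k, ∀ b ∈ (T.sort (· ≤ ·)).drop k, a < b := by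
  have h : List.Pairwise (· < ·) ((T.sort (· ≤ ·)).take k ++ (T.sort (· ≤ ·)).drop k) := by
    rw [List.take_append_drop]
    exact List.sortedLT_iff_pairwise.mp T.sortedLT_sort
  exact (List.pairwise_append.mp h).2.2

lemma minhom_exists (r : ℕ)
    (IH : ∀ m, ∃ N, ∀ Y : Finset ℕ, N ≤ Y.card → ∀ χ : Finset ℕ → κ,
      ∃ T, T ⊆ Y ∧ T.card = m ∧ Homog r χ T)
    (s : ℕ) : ∃ N, ∀ Y : Finset ℕ, N ≤ Y.card → ∀ χ : Finset ℕ → κ,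
      ∃ T, T ⊆ Y ∧ T.card = s ∧ MinHom r χ T := by
  induction s with
  | zero =>
    refine ⟨0, fun Y _ χ => ⟨∅, Finset.empty_subset _, Finset.card_empty, ?_⟩⟩
    intro a S₁ S₂ h₁ _ hc₁ _ _ _ _ _
    have := Finset.card_le_card h₁
    simp only [Finset.card_empty] at this
    omega
  | succ s ihs =>
    obtain ⟨Ns, hNs⟩ := ihs
    obtain ⟨Nr, hNr⟩ := IH Ns
    refine ⟨Nr + 1, fun Y hY χ => ?_⟩
    have hYne : Y.Nonempty := Finset.card_pos.mp (by omega)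
    set a := Y.min' hYne with ha
    have haY : a ∈ Y := Y.min'_mem hYne
    have hY' : Nr ≤ (Y.erase a).card := by
      rw [Finset.card_erase_of_mem haY]; omega
    obtain ⟨B, hBY, hBc, hBhom⟩ := hNr (Y.erase a) hY' (fun S => χ (insert a S))
    obtain ⟨T', hT'B, hT'c, hT'min⟩ := hNs B (le_of_eq hBc.symm) χ
    have haT' : a ∉ T' := fun h => (Finset.mem_erase.mp (hBY (hT'B h))).1 rfl
    refine ⟨insert a T', ?_, ?_, ?_⟩
    · intro x hx
      rcases Finset.mem_insert.mp hx with rfl | hx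
      · exact haY
      · exact Finset.mem_of_mem_erase (hBY (hT'B hx))
    · rw [Finset.card_insert_of_notMem haT', hT'c]
    · intro b S₁ S₂ h₁ h₂ hc₁ hc₂ hb₁ hb₂ hlb₁ hlb₂
      by_cases hba : b = a
      · subst hba
        have e₁ : insert a (S₁.erase a) = S₁ := Finset.insert_erase hb₁
        have e₂ : insert a (S₂.erase a) = S₂ := Finset.insert_erase hb₂
        rw [← e₁, ← e₂]
        refine hBhom (S₁.erase a) ?_ ?_ (S₂.erase a) ?_ ?_
        · exact (Finset.subset_insert_iff.mp h₁).trans hT'B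
        · rw [Finset.card_erase_of_mem hb₁, hc₁]; omega
        · exact (Finset.subset_insert_iff.mp h₂).trans hT'B
        · rw [Finset.card_erase_of_mem hb₂, hc₂]; omega
      · have hbY : b ∈ Y := by
          rcases Finset.mem_insert.mp (h₁ hb₁) with h' | h'
          · exact absurd h' hba
          · exact Finset.mem_of_mem_erase (hBY (hT'B h'))
        have haS₁ : a ∉ S₁ := fun h => hba (le_antisymm (hlb₁ a h) (Y.min'_le b hbY))
        have haS₂ : a ∉ S₂ := fun h => hba (le_antisymm (hlb₂ a h) (Y.min'_le b hbY))
        have hS₁T' : S₁ ⊆ T' := by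
          intro x hx
          rcases Finset.mem_insert.mp (h₁ hx) with rfl | h'
          · exact absurd hx haS₁
          · exact h'
        have hS₂T' : S₂ ⊆ T' := by
          intro x hx
          rcases Finset.mem_insert.mp (h₂ hx) with rfl | h'
          · exact absurd hx haS₂
          · exact h'
        exact hT'min b S₁ S₂ hS₁T' hS₂T' hc₁ hc₂ hb₁ hb₂ hlb₁ hlb₂

lemma ramsey [Nonempty κ] (r : ℕ) :
    ∀ m : ℕ, ∃ N, ∀ Y : Finset ℕ, N ≤ Y.card → ∀ χ : Finset ℕ → κ,
      ∃ T, T ⊆ Y ∧ T.card = m ∧ Homog r χ T := by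
  induction r with
  | zero =>
    intro m
    refine ⟨m, fun Y hY χ => ?_⟩
    obtain ⟨T, hTY, hTc⟩ := Finset.exists_subset_card_eq hY
    refine ⟨T, hTY, hTc, ?_⟩
    intro S₁ _ hc₁ S₂ _ hc₂
    rw [Finset.card_eq_zero.mp hc₁, Finset.card_eq_zero.mp hc₂]
  | succ r ih =>
    intro m
    classical
    set k := Fintype.card κ with hk
    obtain ⟨N, hN⟩ := minhom_exists r ih (k * m + 1 + r)
    refine ⟨N, fun Y hY χ => ?_⟩
    obtain ⟨T, hTY, hTc, hmin⟩ := hN Y hY χ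
    set L := T.sort (· ≤ ·) with hL
    have hLlen : L.length = k * m + 1 + r := by rw [hL, Finset.length_sort, hTc]
    have hLnd : L.Nodup := T.sort_nodup (· ≤ ·)
    set s₀ := k * m + 1 with hs₀
    set Tlow := (L.take s₀).toFinset with hTlow
    set U := (L.drop s₀).toFinset with hU
    have hTlowT : Tlow ⊆ T := by
      intro x hx
      rw [hTlow, List.mem_toFinset] at hx
      exact (Finset.mem_sort (· ≤ ·)).mp ((L.take_sublist s₀).subset hx)
    have hUT : U ⊆ T := by
      intro x hx
      rw [hU, List.mem_toFinset] at hx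
      exact (Finset.mem_sort (· ≤ ·)).mp ((L.drop_sublist s₀).subset hx)
    have hUc : U.card = r := by
      rw [hU, List.toFinset_card_of_nodup (hLnd.sublist (L.drop_sublist s₀))]
      rw [List.length_drop, hLlen]; omega
    have hTlowc : Tlow.card = s₀ := by
      rw [hTlow, List.toFinset_card_of_nodup (hLnd.sublist (L.take_sublist s₀))]
      rw [List.length_take, hLlen]; omega
    have hlowU : ∀ a ∈ Tlow, ∀ b ∈ U, a < b := by
      intro a ha b hb
      rw [hTlow, List.mem_toFinset] at ha
      rw [hU, List.mem_toFinset] at hb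
      exact take_drop_lt T s₀ a ha b hb
    set c : ℕ → κ := fun a => χ (insert a U) with hc
    have hmaps : ∀ a ∈ Tlow, c a ∈ (Finset.univ : Finset κ) := fun a _ => Finset.mem_univ _
    have hcount : (Finset.univ : Finset κ).card * (m - 1) < Tlow.card := by
      rw [Finset.card_univ, ← hk, hTlowc, hs₀]
      have : k * (m - 1) ≤ k * m := Nat.mul_le_mul_left k (Nat.sub_le m 1)
      omega
    obtain ⟨v, _, hv⟩ := Finset.exists_lt_card_fiber_of_mul_lt_card_of_maps_to hmaps hcount
    have hvm : m ≤ (Tlow.filter fun x => c x = v).card := by omega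
    obtain ⟨T'', hT''f, hT''c⟩ := Finset.exists_subset_card_eq hvm
    have hT''Tlow : T'' ⊆ Tlow := hT''f.trans (Finset.filter_subset _ _)
    refine ⟨T'', hT''Tlow.trans (hTlowT.trans hTY), hT''c, ?_⟩
    have key : ∀ S, S ⊆ T'' → S.card = r + 1 → χ S = v := by
      intro S hS hSc
      have hne : S.Nonempty := Finset.card_pos.mp (by omega)
      set a := S.min' hne with ha
      have haS : a ∈ S := S.min'_mem hne
      have haTlow : a ∈ Tlow := hT''Tlow (hS haS)
      have hafib : c a = v := (Finset.mem_filter.mp (hT''f (hS haS))).2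
      have haU : a ∉ U := fun h => lt_irrefl a (hlowU a haTlow a h)
      have hiUc : (insert a U).card = r + 1 := by
        rw [Finset.card_insert_of_notMem haU, hUc]
      have hiUT : insert a U ⊆ T := by
        intro x hx
        rcases Finset.mem_insert.mp hx with rfl | hx
        · exact hTlowT haTlow
        · exact hUT hx
      have hST : S ⊆ T := (hS.trans hT''Tlow).trans hTlowT
      have := hmin a S (insert a U) hST hiUT hSc hiUc haS (Finset.mem_insert_self a U)
        (fun b hb => S.min'_le b hb)
        (fun b hb => by
          rcases Finset.mem_insert.mp hb with rfl | hb
          · exact le_refl _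
          · exact (hlowU a haTlow b hb).le)
      rw [this]; exact hafib
    intro S₁ h₁ hc₁ S₂ h₂ hc₂
    rw [key S₁ h₁ hc₁, key S₂ h₂ hc₂]

end Ramsey

/-! ### Main theorem -/

/-- Encoding of the color of simplices with value set the `l+1` lowest elements of `D`. -/
def chiHat (c d : ℕ) (χ : (Fin d → ℕ) → Fin c) :
    Finset ℕ → (lf : Fin d) → (Finset (Finset (Fin d)) × Equiv.Perm (Fin (lf.1 + 1))) → Fin c :=
  fun D lf p =>
    if h : (lowset (lf.1 + 1) D).card = lf.1 + 1 then
      χ (pointOf (lf.1 + 1) p.1 p.2 ((lowset (lf.1 + 1) D).orderEmbOfFin h))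
    else χ (fun _ => 0)

/-- Ramsey-type lemma: for all `m` there is `n` such that every `c`-coloring of
`[n]^d` admits an `m`-point set `T ⊆ [n]` all of whose simplices (of every
dimension `l ∈ [d]`) are monochromatic. -/
theorem stmt6 (c d : ℕ) (hc : 2 ≤ c) (hd : 1 ≤ d) (m : ℕ) :
    ∃ n : ℕ, ∀ χ : (Fin d → ℕ) → Fin c,
      ∃ T ⊆ Finset.Icc 1 n, T.card = m ∧
        ∀ l ∈ Finset.Icc 1 d, ∀ J : Finset (Finset (Fin d)), IsPartitionInto d l J →
          ∀ σ : Equiv.Perm (Fin l),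
            ∀ x ∈ simplexSet d l J σ T, ∀ y ∈ simplexSet d l J σ T, χ x = χ y := by
  classical
  haveI : Nonempty (Fin c) := ⟨⟨0, by omega⟩⟩
  set κ : Type := (lf : Fin d) → (Finset (Finset (Fin d)) × Equiv.Perm (Fin (lf.1 + 1))) → Fin c
    with hκ
  obtain ⟨N, hN⟩ := ramsey (κ := κ) d (m + d)
  refine ⟨N + m + d, fun χ => ?_⟩
  have hYc : N ≤ (Finset.Icc 1 (N + m + d)).card := by
    rw [Nat.card_Icc]; omega
  obtain ⟨T, hTY, hTc, hhom⟩ := hN (Finset.Icc 1 (N + m + d)) hYc (chiHat c d χ)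
  set L := T.sort (· ≤ ·) with hL
  have hLlen : L.length = m + d := by rw [hL, Finset.length_sort, hTc]
  have hLnd : L.Nodup := T.sort_nodup (· ≤ ·)
  set T' := (L.take m).toFinset with hT'
  have hT'T : T' ⊆ T := by
    intro x hx
    rw [hT', List.mem_toFinset] at hx
    exact (Finset.mem_sort (· ≤ ·)).mp ((L.take_sublist m).subset hx)
  have hT'c : T'.card = m := by
    rw [hT', List.toFinset_card_of_nodup (hLnd.sublist (L.take_sublist m))]
    rw [List.length_take, hLlen]; omega
  refine ⟨T', hT'T.trans hTY, hT'c, ?_⟩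
  intro l hl J hJ σ x hx y hy
  rw [Finset.mem_Icc] at hl
  obtain ⟨l', rfl⟩ : ∃ l', l = l' + 1 := ⟨l - 1, by omega⟩
  have hl'd : l' < d := by omega
  set U := (L.drop (m + (l' + 1))).toFinset with hU
  have hUT : U ⊆ T := by
    intro z hz
    rw [hU, List.mem_toFinset] at hz
    exact (Finset.mem_sort (· ≤ ·)).mp ((L.drop_sublist (m + (l' + 1))).subset hz)
  have hUc : U.card = d - (l' + 1) := by
    rw [hU, List.toFinset_card_of_nodup (hLnd.sublist (L.drop_sublist (m + (l' + 1))))]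
    rw [List.length_drop, hLlen]; omega
  have hT'U : ∀ a ∈ T', ∀ b ∈ U, a < b := by
    intro a ha b hb
    rw [hT', List.mem_toFinset] at ha
    rw [hU, List.mem_toFinset] at hb
    have hb' : b ∈ L.drop m := by
      have : L.drop (m + (l' + 1)) = (L.drop m).drop (l' + 1) := by
        rw [List.drop_drop]
      rw [this] at hb
      exact (((L.drop m).drop_sublist (l' + 1)).subset hb)
    exact take_drop_lt T m a ha b hb'
  -- the key computation for a point of the simplex
  have key : ∀ z ∈ simplexSet d (l' + 1) J σ T',
      ∃ D, D ⊆ T ∧ D.card = d ∧ chiHat c d χ D ⟨l', hl'd⟩ (J, σ) = χ z := by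
    intro z hz
    obtain ⟨α, hmono, hαT', hzeq⟩ := exists_pointOf hJ σ hz
    set S := Finset.image α Finset.univ with hS
    have hSc : S.card = l' + 1 := by
      rw [hS, Finset.card_image_of_injective _ hmono.injective, Finset.card_univ,
        Fintype.card_fin]
    have hST' : S ⊆ T' := by
      intro a ha
      obtain ⟨i, _, rfl⟩ := Finset.mem_image.mp ha
      exact hαT' i
    have hSU : ∀ a ∈ S, ∀ b ∈ U, a < b := fun a ha b hb => hT'U a (hST' ha) b hb
    have hdisj : Disjoint S U := by
      rw [Finset.disjoint_left]
      intro a ha hb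
      exact lt_irrefl a (hSU a ha a hb)
    refine ⟨S ∪ U, Finset.union_subset (hST'.trans hT'T) hUT, ?_, ?_⟩
    · rw [Finset.card_union_of_disjoint hdisj, hSc, hUc]; omega
    · have hlow : lowset (l' + 1) (S ∪ U) = S := lowset_union hSc hSU
      have hemb : α = ⇑(S.orderEmbOfFin hSc) :=
        Finset.orderEmbOfFin_unique hSc (fun i => Finset.mem_image_of_mem α (Finset.mem_univ i))
          hmono
      show chiHat c d χ (S ∪ U) ⟨l', hl'd⟩ (J, σ) = χ z
      unfold chiHat
      simp only [hlow]
      rw [dif_pos hSc]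
      rw [hzeq, ← hemb]
  obtain ⟨Dx, hDxT, hDxc, hDxeq⟩ := key x hx
  obtain ⟨Dy, hDyT, hDyc, hDyeq⟩ := key y hy
  have := hhom Dx hDxT hDxc Dy hDyT hDyc
  rw [← hDxeq, ← hDyeq, this]
end

section
/- Let c, d ∈ ℕ with c ≥ 2 and d ≥ 1. For every m ∈ ℕ, every l ∈ [d], every permutation σ of [l], and every partition J ∈ P_l(d), there exists n ∈ ℕ such that for every set N ⊆ ℕ with |N| = n and every c-coloring χ : N^d → [c] there is a subset T ⊆ N with |T| = m such that the simplex S^σ_J(T) is monochromatic with respect to χ. -/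
open Finset

/-- Split off the top `l` elements of a finite set of naturals. -/
lemma exists_top_split (l : ℕ) : ∀ (P : Finset ℕ), l ≤ P.card →
    ∃ U ⊆ P, U.card = l ∧ ∀ a ∈ P, a ∉ U → ∀ b ∈ U, a < b := by
  induction l with
  | zero => exact fun P _ => ⟨∅, empty_subset _, rfl, by simp⟩
  | succ l ih =>
    intro P hP
    have hne : P.Nonempty := card_pos.mp (by omega)
    obtain ⟨U', hU'sub, hcard, hprop⟩ := ih (P.erase (P.max' hne))
      (by rw [card_erase_of_mem (P.max'_mem hne)]; omega)
    have hbU' : P.max' hne ∉ U' := fun h => (mem_erase.mp (hU'sub h)).1 rfl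
    refine ⟨insert (P.max' hne) U', insert_subset (P.max'_mem hne) (hU'sub.trans (erase_subset _ _)),
      by rw [card_insert_of_notMem hbU', hcard], ?_⟩
    intro a ha haU b hb
    rcases mem_insert.mp hb with rfl | hb'
    · exact lt_of_le_of_ne (P.le_max' a ha) (fun h => haU (h ▸ mem_insert_self _ _))
    · exact hprop a (mem_erase.mpr ⟨fun h => haU (h ▸ mem_insert_self _ _), ha⟩)
        (fun h => haU (mem_insert_of_mem h)) b hb'

/-- Min-homogeneous sets: auxiliary step for finite hypergraph Ramsey. -/
lemma exists_minhomog {κ : Type*} [Fintype κ] [Nonempty κ] (l : ℕ)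
    (IH : ∀ m : ℕ, ∃ n, ∀ N : Finset ℕ, n ≤ N.card → ∀ f : Finset ℕ → κ,
      ∃ T ⊆ N, m ≤ T.card ∧ ∀ S ⊆ T, S.card = l → ∀ S' ⊆ T, S'.card = l → f S = f S') :
    ∀ k : ℕ, ∃ n, ∀ N : Finset ℕ, n ≤ N.card → ∀ f : Finset ℕ → κ,
      ∃ P ⊆ N, k ≤ P.card ∧ ∀ a ∈ P, ∀ S ⊆ P, S.card = l → (∀ b ∈ S, a < b) →
        ∀ S' ⊆ P, S'.card = l → (∀ b ∈ S', a < b) → f (insert a S) = f (insert a S') := by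
  intro k
  classical
  induction k with
  | zero =>
    exact ⟨0, fun N _ f => ⟨∅, empty_subset _, le_refl _, by simp⟩⟩
  | succ k ihk =>
    obtain ⟨nk, hnk⟩ := ihk
    obtain ⟨n₁, hn₁⟩ := IH nk
    refine ⟨n₁ + 1, fun N hN f => ?_⟩
    have hNne : N.Nonempty := card_pos.mp (by omega)
    set a := N.min' hNne with ha
    have haN : a ∈ N := N.min'_mem hNne
    have hR : n₁ ≤ (N.erase a).card := by rw [card_erase_of_mem haN]; omega
    obtain ⟨H, hHsub, hHcard, hHhom⟩ := hn₁ (N.erase a) hR (fun S => f (insert a S))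
    obtain ⟨P', hP'sub, hP'card, hP'min⟩ := hnk H hHcard f
    have haP' : a ∉ P' := fun h => (mem_erase.mp (hHsub (hP'sub h))).1 rfl
    refine ⟨insert a P', insert_subset haN ((hP'sub.trans hHsub).trans (erase_subset _ _)), ?_, ?_⟩
    · rw [card_insert_of_notMem haP']; omega
    · intro a' ha' S hS hScard hSgt S' hS' hS'card hS'gt
      have hsub : ∀ (W : Finset ℕ), W ⊆ insert a P' → (∀ b ∈ W, a' < b) → W ⊆ P' := by
        intro W hW hWgt b hb
        rcases mem_insert.mp (hW hb) with hba | h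
        · exfalso
          have h1 : a' < b := hWgt b hb
          rcases mem_insert.mp ha' with ha'a | h2
          · omega
          · have := N.min'_le a' ((hP'sub.trans hHsub).trans (erase_subset _ _) h2)
            omega
        · exact h
      have hSP' := hsub S hS hSgt
      have hS'P' := hsub S' hS' hS'gt
      rcases mem_insert.mp ha' with rfl | ha'P'
      · exact hHhom S (hSP'.trans hP'sub) hScard S' (hS'P'.trans hP'sub) hS'card
      · exact hP'min a' ha'P' S hSP' hScard hSgt S' hS'P' hS'card hS'gt

/-- Finite hypergraph Ramsey theorem. -/
lemma finite_ramsey {κ : Type*} [Fintype κ] [Nonempty κ] (l : ℕ) :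
    ∀ m : ℕ, ∃ n : ℕ, ∀ N : Finset ℕ, n ≤ N.card → ∀ f : Finset ℕ → κ,
      ∃ T ⊆ N, m ≤ T.card ∧ ∀ S ⊆ T, S.card = l → ∀ S' ⊆ T, S'.card = l → f S = f S' := by
  induction l with
  | zero =>
    intro m
    refine ⟨m, fun N hN f => ?_⟩
    obtain ⟨T, hT, hTcard⟩ := N.exists_subset_card_eq hN
    refine ⟨T, hT, le_of_eq hTcard.symm, fun S _ hS S' _ hS' => ?_⟩
    rw [card_eq_zero.mp hS, card_eq_zero.mp hS']
  | succ l ih =>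
    intro m
    classical
    obtain ⟨n, hn⟩ := exists_minhomog l ih (Fintype.card κ * m + l)
    refine ⟨n, fun N hN f => ?_⟩
    obtain ⟨P, hPsub, hPcard, hPmin⟩ := hn N hN f
    obtain ⟨U, hUsub, hUcard, hUtop⟩ := exists_top_split l P (by omega)
    have hP'card : Fintype.card κ * m ≤ (P \ U).card := by
      rw [card_sdiff_of_subset hUsub, hUcard]; omega
    obtain ⟨i, -, hi⟩ := Finset.exists_le_card_fiber_of_mul_le_card_of_maps_to
      (f := fun b => f (insert b U)) (s := P \ U) (t := Finset.univ)
      (fun b _ => mem_univ _) univ_nonempty (by simpa using hP'card)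
    set Q := (P \ U).filter (fun b => f (insert b U) = i) with hQ
    have hQsub : Q ⊆ P \ U := filter_subset _ _
    have key : ∀ S ⊆ Q, S.card = l + 1 → f S = i := by
      intro S hSQ hScard
      have hSne : S.Nonempty := card_pos.mp (by omega)
      set b := S.min' hSne with hb
      have hbS : b ∈ S := S.min'_mem hSne
      have hbQ : b ∈ Q := hSQ hbS
      have hbP : b ∈ P := (sdiff_subset (hQsub hbQ))
      have hbU : b ∉ U := (mem_sdiff.mp (hQsub hbQ)).2
      have herase : S.erase b ⊆ P := fun x hx => sdiff_subset (hQsub (hSQ (erase_subset _ _ hx)))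
      have heracard : (S.erase b).card = l := by simp [card_erase_of_mem hbS, hScard]
      have heragt : ∀ x ∈ S.erase b, b < x := fun x hx =>
        lt_of_le_of_ne (S.min'_le x (erase_subset _ _ hx)) (Ne.symm (mem_erase.mp hx).1)
      have hUgt : ∀ x ∈ U, b < x := hUtop b hbP hbU
      have h1 : f S = f (insert b U) := by
        rw [← insert_erase hbS]
        exact hPmin b hbP (S.erase b) herase heracard heragt U hUsub hUcard hUgt
      rw [h1, (mem_filter.mp hbQ).2]
    obtain ⟨T, hTQ, hTcard⟩ := Q.exists_subset_card_eq hi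
    refine ⟨T, fun x hx => hPsub (sdiff_subset (hQsub (hTQ hx))), le_of_eq hTcard.symm,
      fun S hS hScard S' hS' hS'card => ?_⟩
    rw [key S (hS.trans hTQ) hScard, key S' (hS'.trans hTQ) hS'card]

/-- For every `m`, `l ∈ [d]`, permutation `σ` of `[l]` and partition `J ∈ P_l(d)`,
there is `n` such that for every `n`-point set `N ⊆ ℕ` and every `c`-coloring of
`N^d` there is an `m`-point `T ⊆ N` with `S^σ_J(T)` monochromatic. -/
theorem stmt7 (c d : ℕ) (hc : 2 ≤ c) (hd : 1 ≤ d) (m l : ℕ) (hl : l ∈ Finset.Icc 1 d)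
    (σ : Equiv.Perm (Fin l)) (J : Finset (Finset (Fin d))) (hJ : IsPartitionInto d l J) :
    ∃ n : ℕ, ∀ N : Finset ℕ, N.card = n → ∀ χ : (Fin d → ℕ) → Fin c,
      ∃ T ⊆ N, T.card = m ∧
        ∀ x ∈ simplexSet d l J σ T, ∀ y ∈ simplexSet d l J σ T, χ x = χ y := by
  classical
  haveI : Nonempty (Fin c) := ⟨⟨0, by omega⟩⟩
  obtain ⟨hJcard, hJne, hJpart⟩ := hJ
  have hrank : ∀ A ∈ J, partRank J A < l := by
    intro A hA
    have hss : J.filter (fun B => B.min < A.min) ⊂ J := by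
      refine (Finset.ssubset_iff_of_subset (Finset.filter_subset _ _)).mpr ⟨A, hA, ?_⟩
      simp [Finset.mem_filter]
    calc partRank J A < J.card := Finset.card_lt_card hss
    _ = l := hJcard
  obtain ⟨n, hn⟩ := finite_ramsey (κ := Fin c) l m
  refine ⟨n, fun N hN χ => ?_⟩
  set part : Fin d → Finset (Fin d) := fun j => (hJpart j).choose with hpartdef
  have hpart : ∀ j, part j ∈ J ∧ j ∈ part j := fun j => (hJpart j).choose_spec.1
  set rk : Fin d → Fin l := fun j => ⟨partRank J (part j), hrank _ (hpart j).1⟩ with hrkdef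
  set f : Finset ℕ → Fin c := fun S =>
    if h : S.card = l then χ (fun j => S.orderEmbOfFin h (σ (rk j))) else Classical.arbitrary _
    with hfdef
  obtain ⟨T₀, hT₀sub, hT₀card, hT₀hom⟩ := hn N (le_of_eq hN.symm) f
  obtain ⟨T, hTsub, hTcard⟩ := T₀.exists_subset_card_eq hT₀card
  refine ⟨T, hTsub.trans hT₀sub, hTcard, ?_⟩
  -- key: every simplex point is colored by `f` of its value set
  have key : ∀ x ∈ simplexSet d l J σ T, ∃ S ⊆ T, S.card = l ∧ f S = χ x := by
    rintro x ⟨α, hmono, hmem, hprop⟩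
    set S : Finset ℕ := Finset.image α Finset.univ with hSdef
    have hScard : S.card = l := by
      rw [hSdef, Finset.card_image_of_injective _ hmono.injective, Finset.card_univ,
        Fintype.card_fin]
    have hSsub : S ⊆ T := by
      intro b hb
      obtain ⟨i, -, rfl⟩ := Finset.mem_image.mp hb
      exact hmem i
    refine ⟨S, hSsub, hScard, ?_⟩
    have hemb : α = S.orderEmbOfFin hScard :=
      Finset.orderEmbOfFin_unique hScard
        (fun i => Finset.mem_image.mpr ⟨i, Finset.mem_univ _, rfl⟩) hmono
    have hx : (fun j => S.orderEmbOfFin hScard (σ (rk j))) = x := by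
      funext j
      rw [← hemb]
      exact (hprop j (part j) (hpart j).1 (hpart j).2 (rk j) rfl).symm
    rw [hfdef]
    simp only [hScard, dif_pos]
    rw [hx]
  intro x hx y hy
  obtain ⟨Sx, hSx, hSxcard, hfx⟩ := key x hx
  obtain ⟨Sy, hSy, hSycard, hfy⟩ := key y hy
  rw [← hfx, ← hfy]
  exact hT₀hom Sx (hSx.trans hTsub) hSxcard Sy (hSy.trans hTsub) hSycard
end
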